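/- arXiv:math/0202145 — 7 statements merged into one kernel-verified Lean document; each statement's English description precedes it below -/
import Mathlib

section
/- For every x ∈ V_l \ V_{l+1} (l ≥ 0), the family (f(θ)·θ(x))_{θ ∈ Ĝ} is absolutely summable and Σ_{θ ∈ Ĝ} f(θ)·θ(x) = Σ_{n=0}^{l} (φ_n − φ_{n+1})·q^{n·m_n}. -/
open MeasureTheory Filter Topology

def UnitaryCharacter (G : Type*) [Group G] [TopologicalSpace G] :=
  {θ : G → ℂ // Continuous θ ∧ (∀ a b : G, θ (a * b) = θ a * θ b) ∧
    ∀ a : G, ‖θ a‖ = 1}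

/-!
Let `level θ` be the least `n` with `θ ∈ V_n^⊥`; then `f θ = φ (level θ)` and
`V_n^⊥ = {θ | level θ ≤ n}`.
Abel summation along this filtration writes the partial sum over `V_n^⊥` as
`φ_n T_n + Σ_{k<n} (φ_k - φ_{k+1}) T_k` with `T_k = Σ_{θ ∈ V_k^⊥} θ x`. For `k ≤ l` every
`θ ∈ V_k^⊥` is `1` at `x`, so `T_k = q^{k m_k}`. For `k > l` we have `T_k = 0`, because `V_k^⊥` is
stable under multiplication by some `ψ ∈ V_{l+1}^⊥` with `ψ x ≠ 1`. Such a `ψ` exists: the Haar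
measure gives `[G : V_{l+1}] = q^{(l+1) m_{l+1}} = |V_{l+1}^⊥|`, whereas by linear independence of
characters at most `[G : V_{l+1} ⊔ ⟨x⟩] < [G : V_{l+1}]` characters are trivial on `V_{l+1}` and at
`x`. Absolute summability holds since at most `q^{n m_n}` characters have level `n`.
-/

namespace UnitaryCharacter

section Group

variable {G : Type*} [Group G] [TopologicalSpace G]

theorem ext {θ ψ : UnitaryCharacter G} (h : ∀ x, θ.1 x = ψ.1 x) : θ = ψ :=
  Subtype.ext (funext h)

@[simp]
theorem norm_apply (θ : UnitaryCharacter G) (x : G) : ‖θ.1 x‖ = 1 :=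
  θ.2.2.2 x

theorem apply_ne_zero (θ : UnitaryCharacter G) (x : G) : θ.1 x ≠ 0 := by
  intro h
  simpa [h] using θ.norm_apply x

def toMonoidHom (θ : UnitaryCharacter G) : G →* ℂ where
  toFun := θ.1
  map_one' := mul_left_cancel₀ (θ.apply_ne_zero 1) (by rw [← θ.2.2.1, mul_one, mul_one])
  map_mul' := θ.2.2.1

instance : Mul (UnitaryCharacter G) where
  mul ψ θ := ⟨fun x => ψ.1 x * θ.1 x, ψ.2.1.mul θ.2.1,
    fun a b => by simp only [ψ.2.2.1, θ.2.2.1]; ring,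
    fun a => by rw [norm_mul, ψ.2.2.2, θ.2.2.2, mul_one]⟩

@[simp]
theorem mul_apply (ψ θ : UnitaryCharacter G) (x : G) : (ψ * θ).1 x = ψ.1 x * θ.1 x := rfl

theorem mul_right_injective (ψ : UnitaryCharacter G) : Function.Injective (ψ * ·) :=
  fun θ θ' h => ext fun x =>
    mul_left_cancel₀ (ψ.apply_ne_zero x) (by simpa using congrArg (fun χ => χ.1 x) h)

theorem sum_apply_eq_zero {s : Finset (UnitaryCharacter G)} {ψ : UnitaryCharacter G}
    (hs : ∀ θ ∈ s, ψ * θ ∈ s) {x : G} (hx : ψ.1 x ≠ 1) : ∑ θ ∈ s, θ.1 x = 0 := by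
  classical
  have himage : s.image (ψ * ·) = s :=
    Finset.eq_of_subset_of_card_le (Finset.image_subset_iff.2 hs)
      (Finset.card_image_of_injective s ψ.mul_right_injective).ge
  have hfixed : ψ.1 x * ∑ θ ∈ s, θ.1 x = ∑ θ ∈ s, θ.1 x := by
    conv_rhs => rw [← himage]
    rw [Finset.sum_image fun θ _ θ' _ h => ψ.mul_right_injective h, Finset.mul_sum]
    rfl
  have hzero : (ψ.1 x - 1) * ∑ θ ∈ s, θ.1 x = 0 := by linear_combination hfixed
  exact (mul_eq_zero.1 hzero).resolve_left (sub_ne_zero.2 hx)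

def annihilator (H : Subgroup G) : Set (UnitaryCharacter G) :=
  {θ | ∀ x ∈ (H : Set G), θ.1 x = 1}

theorem annihilator_anti : Antitone (annihilator (G := G)) :=
  fun _ _ hHK _ hθ x hx => hθ x (hHK hx)

theorem mul_mem_annihilator {H : Subgroup G} {ψ θ : UnitaryCharacter G}
    (hψ : ψ ∈ annihilator H) (hθ : θ ∈ annihilator H) : ψ * θ ∈ annihilator H :=
  fun x hx => by rw [mul_apply, hψ x hx, hθ x hx, mul_one]

theorem mem_annihilator_iff_le_ker {H : Subgroup G} {θ : UnitaryCharacter G} :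
    θ ∈ annihilator H ↔ H ≤ θ.toMonoidHom.ker :=
  Iff.rfl

theorem natCard_annihilator_le_index (H : Subgroup G) [H.Normal] [H.FiniteIndex] :
    Nat.card (annihilator H) ≤ H.index := by
  let χ : annihilator H → (G ⧸ H →* ℂ) := fun θ =>
    QuotientGroup.lift H θ.1.toMonoidHom θ.2
  have hχ : Function.Injective χ := fun θ θ' h =>
    Subtype.ext <| ext fun x => DFunLike.congr_fun h (x : G ⧸ H)
  have hli := (linearIndependent_monoidHom (G ⧸ H) ℂ).comp χ hχ
  have := hli.finite
  have := Fintype.ofFinite (annihilator H)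
  have := Fintype.ofFinite (G ⧸ H)
  calc Nat.card (annihilator H) = Fintype.card (annihilator H) := Nat.card_eq_fintype_card
    _ ≤ Module.finrank ℂ (G ⧸ H → ℂ) := hli.fintype_card_le_finrank
    _ = H.index := by
      rw [Module.finrank_fintype_fun_eq_card, Subgroup.index_eq_card, Nat.card_eq_fintype_card]

end Group

theorem exists_mem_annihilator_apply_ne_one {G : Type*} [CommGroup G] [TopologicalSpace G]
    (H : Subgroup G) [H.FiniteIndex] (hcard : H.index ≤ Nat.card (annihilator H)) {x : G}
    (hx : x ∉ H) : ∃ ψ ∈ annihilator H, ψ.1 x ≠ 1 := by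
  by_contra! htriv
  set K := H ⊔ Subgroup.zpowers x
  have hxK : x ∈ K := Subgroup.mem_sup_right (Subgroup.mem_zpowers x)
  have hHK : H < K := lt_of_le_of_ne le_sup_left fun h => hx (h ▸ hxK)
  have : K.FiniteIndex := Subgroup.finiteIndex_of_le hHK.le
  have heq : annihilator H = annihilator K := by
    refine subset_antisymm (fun θ hθ => ?_) (annihilator_anti hHK.le)
    exact mem_annihilator_iff_le_ker.2 <| sup_le (mem_annihilator_iff_le_ker.1 hθ)
      (Subgroup.zpowers_le.2 (htriv θ hθ))
  have := calc H.index ≤ Nat.card (annihilator H) := hcard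
    _ = Nat.card (annihilator K) := by rw [heq]
    _ ≤ K.index := natCard_annihilator_le_index K
    _ < H.index := Subgroup.index_strictAnti hHK
  exact lt_irrefl _ this

theorem sum_annihilator_apply_eq_ite {G : Type*} [CommGroup G] [TopologicalSpace G] {V : ℕ → Subgroup G}
    (hV : Antitone V) {B : ℕ → Finset (UnitaryCharacter G)}
    (hB : ∀ k θ, θ ∈ B k ↔ θ ∈ annihilator (V k)) {l : ℕ} [(V (l + 1)).FiniteIndex]
    (hcard : (V (l + 1)).index ≤ Nat.card (annihilator (V (l + 1)))) {x : G} (hxl : x ∈ V l)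
    (hxl1 : x ∉ V (l + 1)) (k : ℕ) :
    ∑ θ ∈ B k, θ.1 x = if k ≤ l then ((B k).card : ℂ) else 0 := by
  split_ifs with hk
  · rw [Finset.sum_congr rfl fun θ hθ => (hB k θ).1 hθ x (hV hk hxl), Finset.sum_const,
      nsmul_one]
  · obtain ⟨ψ, hψ, hψx⟩ := exists_mem_annihilator_apply_ne_one _ hcard hxl1
    have hψk : ψ ∈ annihilator (V k) := annihilator_anti (hV (by omega)) hψ
    exact sum_apply_eq_zero (fun θ hθ => (hB k _).2 <|
      mul_mem_annihilator hψk ((hB k θ).1 hθ)) hψx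

section Filtration

variable {G : Type*} [Group G] [TopologicalSpace G] (V : ℕ → Subgroup G)
  (hall : ∀ θ : UnitaryCharacter G, ∃ n, ∀ x ∈ (V n : Set G), θ.1 x = 1)

noncomputable def level (θ : UnitaryCharacter G) : ℕ := by
  classical exact Nat.find (hall θ)

theorem level_le_iff (hV : Antitone V) {θ : UnitaryCharacter G} {n : ℕ} :
    level V hall θ ≤ n ↔ θ ∈ annihilator (V n) := by
  classical
  rw [level, Nat.find_le_iff]
  exact ⟨fun ⟨k, hk, hθ⟩ => annihilator_anti (hV hk) hθ, fun hθ => ⟨n, le_rfl, hθ⟩⟩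

theorem apply_eq_comp_level (hV0 : V 0 = ⊤) {φ : ℕ → ℂ} {f : UnitaryCharacter G → ℂ}
    (hf0 : ∀ θ : UnitaryCharacter G, (∀ x : G, θ.1 x = 1) → f θ = φ 0)
    (hf : ∀ θ : UnitaryCharacter G, ∀ n : ℕ, 1 ≤ n →
      (∀ x ∈ (V n : Set G), θ.1 x = 1) →
      (∃ x ∈ (V (n - 1) : Set G), θ.1 x ≠ 1) → f θ = φ n)
    (θ : UnitaryCharacter G) : f θ = φ (level V hall θ) := by
  classical
  have hspec : θ ∈ annihilator (V (level V hall θ)) := Nat.find_spec (hall θ)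
  rcases hN : level V hall θ with _ | n
  · rw [hN, hV0] at hspec
    exact hf0 θ fun x => hspec x trivial
  · have hmin : θ ∉ annihilator (V n) := Nat.find_min (hall θ) (by unfold level at hN; omega)
    obtain ⟨y, hy, hθy⟩ : ∃ y ∈ (V n : Set G), θ.1 y ≠ 1 := by simpa [annihilator] using hmin
    exact hf θ (n + 1) n.succ_pos (hN ▸ hspec) ⟨y, hy, hθy⟩

end Filtration

end UnitaryCharacter

section Sublevel

variable {α : Type*} {N : α → ℕ} {B : ℕ → Finset α} (hB : ∀ n a, a ∈ B n ↔ N a ≤ n)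
include hB

theorem sum_sublevel_mul {R : Type*} [CommRing R] {f : α → R} {φ : ℕ → R}
    (hf : ∀ a, f a = φ (N a)) (g : α → R) (n : ℕ) :
    ∑ a ∈ B n, f a * g a =
      φ n * ∑ a ∈ B n, g a + ∑ k ∈ Finset.range n, (φ k - φ (k + 1)) * ∑ a ∈ B k, g a := by
  induction n with
  | zero =>
    rw [Finset.range_zero, Finset.sum_empty, add_zero, Finset.mul_sum]
    exact Finset.sum_congr rfl fun a ha => by rw [hf, Nat.le_zero.1 ((hB 0 a).1 ha)]
  | succ n ih =>
    classical
    have hsub : B n ⊆ B (n + 1) := fun a ha => (hB _ a).2 (((hB n a).1 ha).trans n.le_succ)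
    have hnew : ∑ a ∈ B (n + 1) \ B n, f a * g a = φ (n + 1) * ∑ a ∈ B (n + 1) \ B n, g a := by
      rw [Finset.mul_sum]
      refine Finset.sum_congr rfl fun a ha => ?_
      rw [Finset.mem_sdiff, hB, hB] at ha
      rw [hf, show N a = n + 1 by omega]
    rw [← Finset.sum_sdiff hsub, ← Finset.sum_sdiff hsub (f := g), ih, hnew,
      Finset.sum_range_succ]
    ring

theorem summable_comp_of_sublevel {u : ℕ → ℝ} (hu : ∀ n, 0 ≤ u n)
    (hs : Summable fun n => u n * (B n).card) : Summable fun a => u (N a) := by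
  classical
  refine summable_of_sum_le (c := ∑' n, u n * (B n).card) (fun a => hu _) fun s => ?_
  rw [Finset.sum_comp]
  refine (Finset.sum_le_sum fun n _ => ?_).trans
    (hs.sum_le_tsum _ fun n _ => mul_nonneg (hu n) (Nat.cast_nonneg _))
  rw [nsmul_eq_mul, mul_comm]
  gcongr
  · exact hu n
  · exact fun a ha => (hB n a).2 (Finset.mem_filter.1 ha).2.le

theorem tsum_eq_of_sum_sublevel_eventually_eq {E : Type*} [AddCommMonoid E] [TopologicalSpace E]
    [T2Space E] {F : α → E} (hF : Summable F) {c : E}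
    (hc : ∀ᶠ n in atTop, ∑ a ∈ B n, F a = c) : ∑' a, F a = c := by
  have hmono : Monotone B := fun m n hmn a ha => (hB n a).2 (((hB m a).1 ha).trans hmn)
  have hexhaust : Tendsto B atTop atTop :=
    tendsto_atTop_finset_of_monotone hmono fun a => ⟨N a, (hB _ a).2 le_rfl⟩
  exact tendsto_nhds_unique (hF.hasSum.comp hexhaust)
    (tendsto_const_nhds.congr' (hc.mono fun _ h => h.symm))

end Sublevel

theorem Subgroup.index_eq_of_measure_eq_inv {G : Type*} [Group G] [MeasurableSpace G]
    [MeasurableMul G] (μ : Measure G) [μ.IsMulLeftInvariant] [IsProbabilityMeasure μ] (H : Subgroup G)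
    [H.FiniteIndex] (hH : MeasurableSet (H : Set G)) {k : ℕ} (hμ : μ H = (k : ENNReal)⁻¹) :
    H.index = k := by
  have h := H.index_mul_measure hH μ
  rw [hμ, measure_univ] at h
  exact_mod_cast (ENNReal.eq_inv_of_mul_eq_one_left h).trans (inv_inv _)

theorem stmt1_general
    (q : ℕ)
    (m : ℕ → ℕ)
    (G : Type*) [CommGroup G] [TopologicalSpace G] [IsTopologicalGroup G]
    [CompactSpace G] [MeasurableSpace G] [BorelSpace G]
    (μ : Measure G) [μ.IsHaarMeasure] [IsProbabilityMeasure μ]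
    (V : ℕ → Subgroup G) (hVopen : ∀ n, IsOpen (V n : Set G))
    (hV0 : V 0 = ⊤) (hVdesc : ∀ n, V (n + 1) ≤ V n)
    (hVmeas : ∀ n, μ (V n : Set G) = ((q : ENNReal) ^ (n * m n))⁻¹)
    -- every character is identically 1 on some V_n
    (hall : ∀ θ : UnitaryCharacter G, ∃ n, ∀ x ∈ (V n : Set G), θ.1 x = 1)
    -- the annihilator V_n^⊥ is finite of cardinality q^(n·m_n)
    (hfin : ∀ n, Set.Finite {θ : UnitaryCharacter G | ∀ x ∈ (V n : Set G), θ.1 x = 1})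
    (hcard : ∀ n, Nat.card {θ : UnitaryCharacter G // ∀ x ∈ (V n : Set G), θ.1 x = 1}
      = q ^ (n * m n))
    (φ : ℕ → ℂ) (hφ : Summable fun n => ‖φ n‖ * (q : ℝ) ^ (n * m n))
    (f : UnitaryCharacter G → ℂ)
    (hf0 : ∀ θ : UnitaryCharacter G, (∀ x : G, θ.1 x = 1) → f θ = φ 0)
    (hf : ∀ θ : UnitaryCharacter G, ∀ n : ℕ, 1 ≤ n →
      (∀ x ∈ (V n : Set G), θ.1 x = 1) →
      (∃ x ∈ (V (n - 1) : Set G), θ.1 x ≠ 1) → f θ = φ n)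
    (l : ℕ) (x : G) (hx : x ∈ (V l : Set G) \ (V (l + 1) : Set G)) :
    Summable (fun θ : UnitaryCharacter G => ‖f θ * θ.1 x‖) ∧
    ∑' θ : UnitaryCharacter G, f θ * θ.1 x
      = ∑ n ∈ Finset.range (l + 1), (φ n - φ (n + 1)) * (q : ℂ) ^ (n * m n) := by
  open UnitaryCharacter in
  obtain ⟨hxl, hxl1⟩ := hx
  have hV : Antitone V := antitone_nat_of_succ_le hVdesc
  set N := level V hall
  set B : ℕ → Finset (UnitaryCharacter G) := fun n => (hfin n).toFinset
  have hB : ∀ n θ, θ ∈ B n ↔ N θ ≤ n := fun n θ =>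
    (hfin n).mem_toFinset.trans (level_le_iff V hall hV).symm
  have hfN := apply_eq_comp_level V hall hV0 hf0 hf
  have hBcard n : (B n).card = q ^ (n * m n) :=
    (Set.ncard_eq_toFinset_card _ (hfin n)).symm.trans <|
      (Nat.card_coe_set_eq _).symm.trans (hcard n)
  have := Subgroup.quotient_finite_of_isOpen _ (hVopen (l + 1))
  have := Subgroup.finiteIndex_of_finite_quotient (H := V (l + 1))
  have hindex : (V (l + 1)).index = q ^ ((l + 1) * m (l + 1)) :=
    Subgroup.index_eq_of_measure_eq_inv μ _ (hVopen _).measurableSet (by rw [hVmeas, Nat.cast_pow])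
  have hT k : ∑ θ ∈ B k, θ.1 x = if k ≤ l then (q : ℂ) ^ (k * m k) else 0 := by
    rw [sum_annihilator_apply_eq_ite hV (fun k _ => (hfin k).mem_toFinset) (hindex.trans (hcard _).symm).le
      hxl hxl1, hBcard, Nat.cast_pow]
  have hsum : Summable fun θ : UnitaryCharacter G => ‖f θ * θ.1 x‖ := by
    simpa [hfN] using
      summable_comp_of_sublevel hB (fun n => norm_nonneg (φ n)) (by simpa [hBcard] using hφ)
  refine ⟨hsum, tsum_eq_of_sum_sublevel_eventually_eq hB hsum.of_norm ?_⟩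
  filter_upwards [eventually_gt_atTop l] with n hn
  refine (sum_sublevel_mul hB hfN (fun θ => θ.1 x) n).trans ?_
  simp only [hT, if_neg hn.not_ge, mul_zero, zero_add, mul_ite, ← Finset.sum_filter]
  congr 1
  ext k
  simp only [Finset.mem_filter, Finset.mem_range]
  omega

/-- for `x ∈ V_l \ V_{l+1}`, the family `(f(θ)·θ(x))_{θ ∈ Ĝ}` is
absolutely summable and `Σ_{θ ∈ Ĝ} f(θ)·θ(x) = Σ_{n=0}^{l} (φ_n − φ_{n+1}) q^{n m_n}`. -/
theorem stmt1
    (q : ℕ) (hq : 2 ≤ q)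
    (m : ℕ → ℕ) (hm0 : m 0 = 0) (hm1 : m 1 = 1)
    (hmgrow : ∀ n : ℕ, 1 ≤ n → 2 * m n ≤ m (n + 1))
    (G : Type*) [CommGroup G] [TopologicalSpace G] [IsTopologicalGroup G]
    [CompactSpace G] [MeasurableSpace G] [BorelSpace G]
    (μ : Measure G) [μ.IsHaarMeasure] [IsProbabilityMeasure μ]
    (V : ℕ → Subgroup G) (hVopen : ∀ n, IsOpen (V n : Set G))
    (hV0 : V 0 = ⊤) (hVdesc : ∀ n, V (n + 1) ≤ V n)
    (hVmeas : ∀ n, μ (V n : Set G) = ((q : ENNReal) ^ (n * m n))⁻¹)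
    -- every character is identically 1 on some V_n
    (hall : ∀ θ : UnitaryCharacter G, ∃ n, ∀ x ∈ (V n : Set G), θ.1 x = 1)
    -- the annihilator V_n^⊥ is finite of cardinality q^(n·m_n)
    (hfin : ∀ n, Set.Finite {θ : UnitaryCharacter G | ∀ x ∈ (V n : Set G), θ.1 x = 1})
    (hcard : ∀ n, Nat.card {θ : UnitaryCharacter G // ∀ x ∈ (V n : Set G), θ.1 x = 1}
      = q ^ (n * m n))
    (φ : ℕ → ℂ) (hφ : Summable fun n => ‖φ n‖ * (q : ℝ) ^ (n * m n))
    (f : UnitaryCharacter G → ℂ)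
    (hf0 : ∀ θ : UnitaryCharacter G, (∀ x : G, θ.1 x = 1) → f θ = φ 0)
    (hf : ∀ θ : UnitaryCharacter G, ∀ n : ℕ, 1 ≤ n →
      (∀ x ∈ (V n : Set G), θ.1 x = 1) →
      (∃ x ∈ (V (n - 1) : Set G), θ.1 x ≠ 1) → f θ = φ n)
    (l : ℕ) (x : G) (hx : x ∈ (V l : Set G) \ (V (l + 1) : Set G)) :
    Summable (fun θ : UnitaryCharacter G => ‖f θ * θ.1 x‖) ∧
    ∑' θ : UnitaryCharacter G, f θ * θ.1 x
      = ∑ n ∈ Finset.range (l + 1), (φ n - φ (n + 1)) * (q : ℂ) ^ (n * m n) :=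
  stmt1_general q m G μ V hVopen hV0 hVdesc hVmeas hall hfin hcard φ hφ f hf0 hf l x hx
end

section
/- For every real α < −1, the function F^{(α)} is μ-integrable on G and ∫_G F^{(α)}(y) dμ(y) = 0. -/
/-!
On the shell `V l \ V (l + 1)` the function `F` is constant, equal to
`c l = levelValue a b l = -a 1 + ∑_{n=1}^{l} (a n - a (n + 1)) b n`
with `a n = q^{α n m_n}` and `b n = q^{n m_n}`, and the shell has measure `1 / b l - 1 / b (l + 1)`.
As `a n b n ≤ q^{(α + 1) n}` and `α < -1`, the values `c l` are bounded, so `F` is integrable and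
`∫ F = ∑ c l (1 / b l - 1 / b (l + 1))`. Summation by parts turns the partial sum up to `N` into
`-a (N + 1) - c N / b (N + 1)`, which tends to `0`.
-/

open MeasureTheory Filter Topology Set Function

section Partition

variable {α : Type*}

theorem Antitone.pairwise_disjoint_sdiff_succ {s : ℕ → Set α} (hs : Antitone s) :
    Pairwise (Disjoint on fun n => s n \ s (n + 1)) :=
  (pairwise_disjoint_on _).2 fun _ _ hij =>
    Set.disjoint_left.2 fun _ hi hj => hi.2 (hs (Nat.succ_le_of_lt hij) hj.1)

theorem compl_iUnion_sdiff_succ_subset_iInter {s : ℕ → Set α} (h0 : s 0 = univ) :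
    (⋃ n, s n \ s (n + 1))ᶜ ⊆ ⋂ n, s n := by
  intro x hx
  simp only [mem_compl_iff, mem_iUnion, Set.mem_sdiff, not_exists, not_and, not_not] at hx
  refine mem_iInter.2 fun n => ?_
  induction n with
  | zero => simp [h0]
  | succ n ih => exact hx n ih

theorem integrable_and_hasSum_integral_of_eqOn_const [MeasurableSpace α] {μ : Measure α}
    [IsFiniteMeasure μ] {A : ℕ → Set α} (hA : ∀ n, MeasurableSet (A n))
    (hAd : Pairwise (Disjoint on A)) {c : ℕ → ℝ} {C : ℝ} (hc : ∀ n, |c n| ≤ C) {F : α → ℝ}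
    (hF : ∀ n, EqOn F (fun _ => c n) (A n)) (hF0 : EqOn F 0 (⋃ n, A n)ᶜ) :
    Integrable F μ ∧ HasSum (fun n => c n * μ.real (A n)) (∫ x, F x ∂μ) := by
  have hU : MeasurableSet (⋃ n, A n) := MeasurableSet.iUnion hA
  have hF_piece : ∀ n, ∫ x in A n, F x ∂μ = c n * μ.real (A n) := fun n => by
    rw [setIntegral_congr_fun (hA n) (hF n), setIntegral_const, smul_eq_mul, mul_comm]
  have hnorm_piece : ∀ n, ∫ x in A n, ‖F x‖ ∂μ ≤ C * μ.real (A n) := fun n => by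
    rw [setIntegral_congr_fun (hA n) fun x hx => congrArg norm (hF n hx), setIntegral_const,
      smul_eq_mul, Real.norm_eq_abs, mul_comm]
    exact mul_le_mul_of_nonneg_right (hc n) measureReal_nonneg
  have hU_int : IntegrableOn F (⋃ n, A n) μ :=
    integrableOn_iUnion_of_summable_integral_norm
      (fun n => IntegrableOn.congr_fun integrableOn_const (hF n).symm (hA n))
      (((summable_measure_toReal hA hAd).mul_left C).of_nonneg_of_le
        (fun _ => integral_nonneg fun _ => norm_nonneg _) hnorm_piece)
  have hF_int : Integrable F μ := by
    rw [← integrableOn_univ, ← union_compl_self (⋃ n, A n)]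
    exact hU_int.union (IntegrableOn.congr_fun integrableOn_zero hF0.symm hU.compl)
  refine ⟨hF_int, ?_⟩
  rw [← integral_add_compl hU hF_int, setIntegral_congr_fun hU.compl hF0]
  simpa only [Pi.zero_apply, integral_zero, add_zero, hF_piece]
    using hasSum_integral_iUnion hA hAd hU_int

end Partition

section LevelValue

variable (a b : ℕ → ℝ)

def levelValue (l : ℕ) : ℝ := -a 1 + ∑ n ∈ Finset.Icc 1 l, (a n - a (n + 1)) * b n

theorem levelValue_succ (l : ℕ) :
    levelValue a b (l + 1) = levelValue a b l + (a (l + 1) - a (l + 2)) * b (l + 1) := by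
  rw [levelValue, levelValue, Finset.sum_Icc_succ_top (Nat.le_add_left 1 l)]
  exact (add_assoc _ _ _).symm

variable {a b}

theorem sum_levelValue_mul_sub_inv (hb0 : b 0 = 1) (hb : ∀ n, b n ≠ 0) (N : ℕ) :
    ∑ l ∈ Finset.range (N + 1), levelValue a b l * ((b l)⁻¹ - (b (l + 1))⁻¹) =
      -a (N + 1) - levelValue a b N / b (N + 1) := by
  induction N with
  | zero => simp [levelValue, hb0, div_eq_mul_inv, mul_sub]
  | succ N ih =>
    rw [Finset.sum_range_succ, ih, levelValue_succ]
    field_simp [hb (N + 1), hb (N + 2)]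
    ring

theorem abs_levelValue_le (ha : Antitone a) (ha0 : ∀ n, 0 ≤ a n) (hb : ∀ n, 0 ≤ b n)
    (hab : Summable fun n => a n * b n) (l : ℕ) :
    |levelValue a b l| ≤ a 1 + ∑' n, a n * b n := by
  have hsum_nonneg : 0 ≤ ∑ n ∈ Finset.Icc 1 l, (a n - a (n + 1)) * b n :=
    Finset.sum_nonneg fun n _ => mul_nonneg (sub_nonneg.2 (ha n.le_succ)) (hb n)
  have hsum_le : ∑ n ∈ Finset.Icc 1 l, (a n - a (n + 1)) * b n ≤ ∑' n, a n * b n :=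
    calc ∑ n ∈ Finset.Icc 1 l, (a n - a (n + 1)) * b n ≤ ∑ n ∈ Finset.Icc 1 l, a n * b n :=
          Finset.sum_le_sum fun n _ =>
            mul_le_mul_of_nonneg_right (sub_le_self _ (ha0 _)) (hb n)
      _ ≤ ∑' n, a n * b n :=
          hab.sum_le_tsum _ fun n _ => mul_nonneg (ha0 n) (hb n)
  have htsum_nonneg : 0 ≤ ∑' n, a n * b n := tsum_nonneg fun n => mul_nonneg (ha0 n) (hb n)
  rw [levelValue, abs_le]
  constructor <;> linarith [ha0 1]

theorem tendsto_sum_levelValue_mul_sub_inv (ha : Antitone a) (ha0 : ∀ n, 0 ≤ a n)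
    (ha_lim : Tendsto a atTop (𝓝 0)) (hb0 : b 0 = 1) (hb : ∀ n, 0 < b n)
    (hb_lim : Tendsto b atTop atTop) (hab : Summable fun n => a n * b n) :
    Tendsto (fun N => ∑ l ∈ Finset.range N, levelValue a b l * ((b l)⁻¹ - (b (l + 1))⁻¹))
      atTop (𝓝 0) := by
  rw [← tendsto_add_atTop_iff_nat 1]
  simp_rw [sum_levelValue_mul_sub_inv hb0 (fun n => (hb n).ne'), div_eq_mul_inv]
  have hbounded : IsBoundedUnder (· ≤ ·) atTop fun N => ‖levelValue a b N‖ :=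
    isBoundedUnder_of ⟨_, fun N => (abs_levelValue_le ha ha0 (fun n => (hb n).le) hab N)⟩
  have hinv : Tendsto (fun N => (b (N + 1))⁻¹) atTop (𝓝 0) :=
    tendsto_inv_atTop_zero.comp ((tendsto_add_atTop_iff_nat 1).2 hb_lim)
  have := (ha_lim.comp (tendsto_add_atTop_nat 1)).neg.sub
    (hinv.zero_mul_isBoundedUnder_le hbounded)
  simpa [mul_comm] using this

end LevelValue

section PowerSequences

variable {s r : ℝ} {k : ℕ → ℕ}

theorem summable_pow_comp_of_le (hr0 : 0 ≤ r) (hr1 : r < 1) (hk : ∀ n, n ≤ k n) :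
    Summable fun n => r ^ k n :=
  (summable_geometric_of_lt_one hr0 hr1).of_nonneg_of_le (fun _ => pow_nonneg hr0 _)
    fun n => pow_le_pow_of_le_one hr0 hr1.le (hk n)

theorem summable_pow_mul_pow_comp (hs0 : 0 ≤ s) (hr0 : 0 ≤ r) (hsr : s * r < 1)
    (hk : ∀ n, n ≤ k n) : Summable fun n => s ^ k n * r ^ k n := by
  simpa only [mul_pow] using summable_pow_comp_of_le (mul_nonneg hs0 hr0) hsr hk

variable (hs0 : 0 < s) (hr : 1 < r) (hsr : s * r < 1) (hk : Monotone k) (hk_le : ∀ n, n ≤ k n)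
include hs0 hr hsr hk hk_le

theorem abs_levelValue_pow_le (l : ℕ) :
    |levelValue (fun n => s ^ k n) (fun n => r ^ k n) l| ≤
      s ^ k 1 + ∑' n, s ^ k n * r ^ k n := by
  have hs1 : s ≤ 1 := by nlinarith
  have ha : Antitone fun n => s ^ k n := (pow_right_anti₀ hs0.le hs1).comp_monotone hk
  exact abs_levelValue_le ha (fun n => pow_nonneg hs0.le _) (fun n => pow_nonneg (by linarith) _)
    (summable_pow_mul_pow_comp hs0.le (by linarith) hsr hk_le) l

theorem tendsto_sum_levelValue_pow_mul_sub_inv (hk0 : k 0 = 0) :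
    Tendsto (fun N => ∑ l ∈ Finset.range N, levelValue (fun n => s ^ k n) (fun n => r ^ k n) l *
      ((r ^ k l)⁻¹ - (r ^ k (l + 1))⁻¹)) atTop (𝓝 0) := by
  have hs1 : s < 1 := by nlinarith
  have hk_lim : Tendsto k atTop atTop := tendsto_atTop_mono hk_le tendsto_id
  have ha : Antitone fun n => s ^ k n := (pow_right_anti₀ hs0.le hs1.le).comp_monotone hk
  exact tendsto_sum_levelValue_mul_sub_inv ha (fun n => pow_nonneg hs0.le _)
    ((tendsto_pow_atTop_nhds_zero_of_lt_one hs0.le hs1).comp hk_lim) (by simp [hk0])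
    (fun n => pow_pos (by linarith) _) ((tendsto_pow_atTop_atTop_of_one_lt hr).comp hk_lim)
    (summable_pow_mul_pow_comp hs0.le (by linarith) hsr hk_le)

end PowerSequences

section Exponents

variable {m : ℕ → ℕ} (hm : ∀ n, 1 ≤ n → m n ≤ m (n + 1))
include hm

theorem one_le_apply_of_one_le (hm1 : 1 ≤ m 1) {n : ℕ} (hn : 1 ≤ n) : 1 ≤ m n := by
  induction n, hn using Nat.le_induction with
  | base => exact hm1
  | succ n hn ih => exact ih.trans (hm n hn)

theorem self_le_mul_apply (hm1 : 1 ≤ m 1) (n : ℕ) : n ≤ n * m n := by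
  rcases Nat.eq_zero_or_pos n with rfl | hn
  · exact Nat.zero_le _
  · exact Nat.le_mul_of_pos_right n (one_le_apply_of_one_le hm hm1 hn)

theorem monotone_mul_apply : Monotone fun n => n * m n := by
  refine monotone_nat_of_le_succ fun n => ?_
  rcases Nat.eq_zero_or_pos n with rfl | hn
  · simp
  · exact Nat.mul_le_mul n.le_succ (hm n hn)

end Exponents

theorem stmt4_general
    (q : ℕ) (hq : 2 ≤ q)
    (m : ℕ → ℕ) (hm1 : m 1 = 1)
    (hmgrow : ∀ n : ℕ, 1 ≤ n → 2 * m n ≤ m (n + 1))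
    (G : Type*) [CommGroup G] [TopologicalSpace G]
    [MeasurableSpace G] [BorelSpace G]
    (μ : Measure G) [IsProbabilityMeasure μ]
    (V : ℕ → Subgroup G) (hVopen : ∀ n, IsOpen (V n : Set G))
    (hV0 : V 0 = ⊤) (hVdesc : ∀ n, V (n + 1) ≤ V n)
    (hVmeas : ∀ n, μ (V n : Set G) = ((q : ENNReal) ^ (n * m n))⁻¹)
    (α : ℝ) (hα : α < -1)
    (F : G → ℝ)
    (hF : ∀ l : ℕ, ∀ y ∈ (V l : Set G) \ (V (l + 1) : Set G),
      F y = -(q : ℝ) ^ α + ∑ n ∈ Finset.Icc 1 l,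
        ((q : ℝ) ^ (α * ((n * m n : ℕ) : ℝ))
            - (q : ℝ) ^ (α * (((n + 1) * m (n + 1) : ℕ) : ℝ))) * (q : ℝ) ^ (n * m n))
    (hF0 : ∀ y ∈ ⋂ n : ℕ, (V n : Set G), F y = 0) :
    Integrable F μ ∧ ∫ y : G, F y ∂μ = 0 := by
  have hq1 : (1 : ℝ) < q := by exact_mod_cast hq
  have hm : ∀ n, 1 ≤ n → m n ≤ m (n + 1) := fun n hn => by linarith [hmgrow n hn]
  have hs0 : 0 < (q : ℝ) ^ α := Real.rpow_pos_of_pos (by positivity) α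
  have hsq : (q : ℝ) ^ α * q < 1 := by
    rw [← Real.rpow_add_one (by positivity)]
    exact Real.rpow_lt_one_of_one_lt_of_neg hq1 (by linarith)
  have hμV : ∀ n, μ.real (V n : Set G) = ((q : ℝ) ^ (n * m n))⁻¹ := fun n => by
    rw [measureReal_def, hVmeas, ENNReal.toReal_inv, ENNReal.toReal_pow, ENNReal.toReal_natCast]
  have hVanti : Antitone fun n => (V n : Set G) := antitone_nat_of_succ_le hVdesc
  have hμA : ∀ l, μ.real ((V l : Set G) \ V (l + 1)) =
      ((q : ℝ) ^ (l * m l))⁻¹ - ((q : ℝ) ^ ((l + 1) * m (l + 1)))⁻¹ := fun l => by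
    rw [measureReal_sdiff (hVanti l.le_succ) (hVopen (l + 1)).measurableSet, hμV, hμV]
  have hFA : ∀ l, EqOn F (fun _ => levelValue (fun n => ((q : ℝ) ^ α) ^ (n * m n))
      (fun n => (q : ℝ) ^ (n * m n)) l) ((V l : Set G) \ V (l + 1)) := fun l y hy => by
    simp only [hF l y hy, levelValue, Real.rpow_mul_natCast (Nat.cast_nonneg q), hm1, one_mul,
      pow_one]
  have hF_compl : EqOn F 0 (⋃ l, (V l : Set G) \ V (l + 1))ᶜ := fun y hy =>
    hF0 y (compl_iUnion_sdiff_succ_subset_iInter (by simp [hV0]) hy)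
  obtain ⟨hF_int, hF_sum⟩ := integrable_and_hasSum_integral_of_eqOn_const (μ := μ)
    (fun l => (hVopen l).measurableSet.diff (hVopen (l + 1)).measurableSet)
    hVanti.pairwise_disjoint_sdiff_succ
    (abs_levelValue_pow_le hs0 hq1 hsq (monotone_mul_apply hm) (self_le_mul_apply hm hm1.ge))
    hFA hF_compl
  refine ⟨hF_int, tendsto_nhds_unique hF_sum.tendsto_sum_nat ?_⟩
  simpa only [hμA] using tendsto_sum_levelValue_pow_mul_sub_inv hs0 hq1 hsq
    (monotone_mul_apply hm) (self_le_mul_apply hm hm1.ge) (zero_mul _)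

/-- for real `α < −1`, the function `F^{(α)}` is `μ`-integrable on `G`
and `∫_G F^{(α)}(y) dμ(y) = 0`. -/
theorem stmt4
    (q : ℕ) (hq : 2 ≤ q)
    (m : ℕ → ℕ) (hm0 : m 0 = 0) (hm1 : m 1 = 1)
    (hmgrow : ∀ n : ℕ, 1 ≤ n → 2 * m n ≤ m (n + 1))
    (G : Type*) [CommGroup G] [TopologicalSpace G] [IsTopologicalGroup G]
    [CompactSpace G] [MeasurableSpace G] [BorelSpace G]
    (μ : Measure G) [μ.IsHaarMeasure] [IsProbabilityMeasure μ]
    (V : ℕ → Subgroup G) (hVopen : ∀ n, IsOpen (V n : Set G))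
    (hV0 : V 0 = ⊤) (hVdesc : ∀ n, V (n + 1) ≤ V n)
    (hVmeas : ∀ n, μ (V n : Set G) = ((q : ENNReal) ^ (n * m n))⁻¹)
    (α : ℝ) (hα : α < -1)
    (F : G → ℝ)
    (hF : ∀ l : ℕ, ∀ y ∈ (V l : Set G) \ (V (l + 1) : Set G),
      F y = -(q : ℝ) ^ α + ∑ n ∈ Finset.Icc 1 l,
        ((q : ℝ) ^ (α * ((n * m n : ℕ) : ℝ))
            - (q : ℝ) ^ (α * (((n + 1) * m (n + 1) : ℕ) : ℝ))) * (q : ℝ) ^ (n * m n))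
    (hF0 : ∀ y ∈ ⋂ n : ℕ, (V n : Set G), F y = 0) :
    Integrable F μ ∧ ∫ y : G, F y ∂μ = 0 :=
  stmt4_general q hq m hm1 hmgrow G μ V hVopen hV0 hVdesc hVmeas α hα F hF hF0
end

section
/- Let q ≥ 2 be an integer and (m_n)_{n≥0} a sequence of natural numbers with m_0 = 0 and n·m_n < (n+1)·m_{n+1} for all n ≥ 0 (in particular m_1 ≥ 1). Set φ_0^{(α)} = 0 and φ_n^{(α)} = q^{α·n·m_n} for n ≥ 1. Then for all real α > 0, t > 0 and every integer l ≥ 0, Σ_{n=0}^{l} (e^{−t·φ_n^{(α)}} − e^{−t·φ_{n+1}^{(α)}})·q^{n·m_n} > 0; that is, the heat kernel G_α(t,·) of the fractional differentiation operator is strictly positive on each set V_l \ V_{l+1}. -/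
/-- strict positivity of the heat kernel
`G_α(t,z) = Σ_{n=0}^{l} (e^{−t φ_n^{(α)}} − e^{−t φ_{n+1}^{(α)}}) q^{n m_n}`
on each set `V_l \ V_{l+1}`, where `φ_0^{(α)} = 0` and `φ_n^{(α)} = q^{α n m_n}`. -/
theorem stmt5 (q : ℕ) (hq : 2 ≤ q) (m : ℕ → ℕ) (hm0 : m 0 = 0)
    (hmono : ∀ n : ℕ, n * m n < (n + 1) * m (n + 1))
    (φ : ℝ → ℕ → ℝ)
    (hφ0 : ∀ α : ℝ, φ α 0 = 0)
    (hφ : ∀ α : ℝ, ∀ n : ℕ, 1 ≤ n → φ α n = (q : ℝ) ^ (α * ((n * m n : ℕ) : ℝ))) :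
    ∀ α t : ℝ, 0 < α → 0 < t → ∀ l : ℕ,
      0 < ∑ n ∈ Finset.range (l + 1),
        (Real.exp (-(t * φ α n)) - Real.exp (-(t * φ α (n + 1)))) * (q : ℝ) ^ (n * m n) := by
  intro α t hα ht l
  have hq1 : (1 : ℝ) < (q : ℝ) := by exact_mod_cast hq.trans_lt' one_lt_two
  have hstep : ∀ n : ℕ, φ α n < φ α (n + 1) := by
    intro n
    rcases Nat.eq_zero_or_pos n with rfl | hn
    · rw [hφ0, hφ α 1 le_rfl]
      exact Real.rpow_pos_of_pos (lt_trans one_pos hq1) _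
    · rw [hφ α n hn, hφ α (n + 1) (Nat.le_add_left 1 n)]
      apply Real.rpow_lt_rpow_left_iff hq1 |>.2
      have := hmono n
      apply mul_lt_mul_of_pos_left _ hα
      exact_mod_cast this
  apply Finset.sum_pos
  · intro n _
    apply mul_pos
    · rw [sub_pos, Real.exp_lt_exp, neg_lt_neg_iff]
      exact mul_lt_mul_of_pos_left (hstep n) ht
    · positivity
  · exact ⟨0, Finset.mem_range.2 (Nat.succ_pos l)⟩
end

section
/- For all real α > 0 and t > 0, the function z ↦ G_α(t,z) is μ-integrable on G and ∫_G G_α(t,z) dμ(z) = 1. -/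
/-!
Off the null set `⋂ Vₙ` every point lies in exactly one shell `V_l \ V_{l+1}`, where the kernel
equals `∑_{n ≤ l} cₙ` with `cₙ = (eₙ - eₙ₊₁) q^{n mₙ}` and `eₙ = exp (-t φₙ)`. Hence the kernel is
a.e. `∑ₙ cₙ 𝟙_{Vₙ}`, a series of nonnegative functions that may be integrated termwise. Since
`μ Vₙ = q^{-n mₙ}`, what remains is the telescoping series `∑ (eₙ - eₙ₊₁) = e₀ = 1`, which
converges because `φ` is monotone and tends to infinity.
-/

open MeasureTheory Filter Topology
open scoped ENNReal

theorem hasSum_sub_succ_of_antitone {e : ℕ → ℝ} (he : Antitone e) (hlim : Tendsto e atTop (𝓝 0)) :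
    HasSum (fun n => e n - e (n + 1)) (e 0) := by
  refine (hasSum_iff_tendsto_nat_of_nonneg (fun n => sub_nonneg.2 (he n.le_succ)) _).2 ?_
  simp_rw [Finset.sum_range_sub']
  simpa using tendsto_const_nhds.sub hlim

section Doubling

variable {m : ℕ → ℕ}

theorem one_le_of_doubling (hm1 : m 1 = 1) (hmgrow : ∀ n, 1 ≤ n → 2 * m n ≤ m (n + 1)) {n : ℕ}
    (hn : 1 ≤ n) : 1 ≤ m n := by
  induction n, hn using Nat.le_induction with
  | base => exact hm1.ge
  | succ n hn ih => linarith [hmgrow n hn]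

theorem monotone_mul_self_of_doubling (hmgrow : ∀ n, 1 ≤ n → 2 * m n ≤ m (n + 1)) :
    Monotone fun n => n * m n := by
  refine monotone_nat_of_le_succ fun n => ?_
  rcases Nat.eq_zero_or_pos n with rfl | hn
  · simp
  · exact Nat.mul_le_mul n.le_succ (by linarith [hmgrow n hn])

theorem le_mul_self_of_doubling (hm1 : m 1 = 1) (hmgrow : ∀ n, 1 ≤ n → 2 * m n ≤ m (n + 1))
    (n : ℕ) : n ≤ n * m n := by
  rcases Nat.eq_zero_or_pos n with rfl | hn
  · simp
  · exact Nat.le_mul_of_pos_right n (one_le_of_doubling hm1 hmgrow hn)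

end Doubling

section RpowSequence

variable {b α : ℝ} {k : ℕ → ℕ} {φ : ℕ → ℝ}

theorem monotone_of_eq_rpow (hb : 1 ≤ b) (hα : 0 ≤ α) (hk : Monotone k) (hφ0 : φ 0 = 0)
    (hφ : ∀ n, 1 ≤ n → φ n = b ^ (α * (k n : ℝ))) : Monotone φ := by
  refine monotone_nat_of_le_succ fun n => ?_
  rw [hφ (n + 1) n.succ_pos]
  rcases Nat.eq_zero_or_pos n with rfl | hn
  · rw [hφ0]; positivity
  · rw [hφ n hn]
    exact Real.rpow_le_rpow_of_exponent_le hb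
      (mul_le_mul_of_nonneg_left (by exact_mod_cast hk n.le_succ) hα)

theorem tendsto_atTop_of_eq_rpow (hb : 1 < b) (hα : 0 < α) (hk : Tendsto k atTop atTop)
    (hφ : ∀ n, 1 ≤ n → φ n = b ^ (α * (k n : ℝ))) : Tendsto φ atTop atTop := by
  have hpow : Tendsto (fun n => (b ^ α) ^ k n) atTop atTop :=
    (tendsto_pow_atTop_atTop_of_one_lt (Real.one_lt_rpow hb hα)).comp hk
  refine hpow.congr' ?_
  filter_upwards [eventually_ge_atTop 1] with n hn
  rw [hφ n hn, Real.rpow_mul (by linarith), Real.rpow_natCast]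

end RpowSequence

section Shells

variable {X : Type*} {V : ℕ → Set X} {z : X}

theorem exists_mem_diff_succ_of_notMem_iInter (hz0 : z ∈ V 0) (hz : z ∉ ⋂ n, V n) :
    ∃ l, z ∈ V l \ V (l + 1) := by
  by_contra! h
  exact hz (Set.mem_iInter.2 fun n => Nat.rec hz0 (fun l hl => by simpa [hl] using h l) n)

theorem tsum_indicator_eq_sum_range {M : Type*} [AddCommMonoid M] [TopologicalSpace M]
    (hV : Antitone V) (b : ℕ → M) {l : ℕ} (hz : z ∈ V l \ V (l + 1)) :
    ∑' n, (V n).indicator (fun _ => b n) z = ∑ n ∈ Finset.range (l + 1), b n := by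
  rw [tsum_eq_sum (s := Finset.range (l + 1))]
  · refine Finset.sum_congr rfl fun n hn => Set.indicator_of_mem ?_ _
    exact hV (Nat.lt_succ_iff.1 (Finset.mem_range.1 hn)) hz.1
  · intro n hn
    exact Set.indicator_of_notMem (fun h => hz.2 (hV (by simpa using hn) h)) _

theorem integrable_and_integral_eq_of_eq_sum_on_shells [MeasurableSpace X] {μ : Measure X}
    [IsFiniteMeasure μ]
    (hVm : ∀ n, MeasurableSet (V n)) (hV : Antitone V) (hV0 : V 0 = Set.univ)
    (hnull : μ (⋂ n, V n) = 0) {c : ℕ → ℝ} (hc : ∀ n, 0 ≤ c n) {K : X → ℝ}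
    (hK : ∀ l, ∀ z ∈ V l \ V (l + 1), K z = ∑ n ∈ Finset.range (l + 1), c n) {s : ℝ}
    (hs : HasSum (fun n => c n * (μ (V n)).toReal) s) :
    Integrable K μ ∧ ∫ z, K z ∂μ = s := by
  have hterm_nonneg : ∀ n, 0 ≤ c n * (μ (V n)).toReal := fun n =>
    mul_nonneg (hc n) ENNReal.toReal_nonneg
  set f : X → ℝ≥0∞ := fun z => ∑' n, (V n).indicator (fun _ => ENNReal.ofReal (c n)) z
  have hf : Measurable f := Measurable.tsum fun n => measurable_const.indicator (hVm n)
  have hKf : K =ᵐ[μ] fun z => (f z).toReal := by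
    filter_upwards [measure_eq_zero_iff_ae_notMem.1 hnull] with z hz
    obtain ⟨l, hl⟩ := exists_mem_diff_succ_of_notMem_iInter (by simp [hV0]) hz
    rw [hK l z hl, show f z = _ from tsum_indicator_eq_sum_range hV _ hl,
      ENNReal.toReal_sum fun n _ => ENNReal.ofReal_ne_top]
    simp only [ENNReal.toReal_ofReal (hc _)]
  have hlint : ∫⁻ z, f z ∂μ = ENNReal.ofReal s := by
    rw [lintegral_tsum fun n => (measurable_const.indicator (hVm n)).aemeasurable,
      ← hs.tsum_eq, ENNReal.ofReal_tsum_of_nonneg hterm_nonneg hs.summable]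
    congr 1 with n
    rw [lintegral_indicator_const (hVm n), ENNReal.ofReal_mul (hc n),
      ENNReal.ofReal_toReal (measure_ne_top μ _)]
  have hfin : ∫⁻ z, f z ∂μ ≠ ∞ := hlint ▸ ENNReal.ofReal_ne_top
  refine ⟨(integrable_toReal_of_lintegral_ne_top hf.aemeasurable hfin).congr hKf.symm, ?_⟩
  rw [integral_congr_ae hKf, integral_toReal hf.aemeasurable (ae_lt_top hf hfin), hlint,
    ENNReal.toReal_ofReal (hs.nonneg hterm_nonneg)]

end Shells

theorem measure_iInter_eq_zero_of_tendsto {X : Type*} [MeasurableSpace X] {μ : Measure X}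
    {s : ℕ → Set X} (hs : Tendsto (fun n => μ (s n)) atTop (𝓝 0)) : μ (⋂ n, s n) = 0 :=
  nonpos_iff_eq_zero.1 (ge_of_tendsto' hs fun n => measure_mono (Set.iInter_subset s n))

theorem stmt6_general
    (q : ℕ) (hq : 2 ≤ q)
    (m : ℕ → ℕ) (hm1 : m 1 = 1)
    (hmgrow : ∀ n : ℕ, 1 ≤ n → 2 * m n ≤ m (n + 1))
    (G : Type*) [CommGroup G] [TopologicalSpace G]
    [MeasurableSpace G] [BorelSpace G]
    (μ : Measure G) [IsProbabilityMeasure μ]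
    (V : ℕ → Subgroup G) (hVopen : ∀ n, IsOpen (V n : Set G))
    (hV0 : V 0 = ⊤) (hVdesc : ∀ n, V (n + 1) ≤ V n)
    (hVmeas : ∀ n, μ (V n : Set G) = ((q : ENNReal) ^ (n * m n))⁻¹)
    (α t : ℝ) (hα : 0 < α) (ht : 0 < t)
    (φ : ℕ → ℝ) (hφ0 : φ 0 = 0)
    (hφ : ∀ n : ℕ, 1 ≤ n → φ n = (q : ℝ) ^ (α * ((n * m n : ℕ) : ℝ)))
    (K : G → ℝ)
    (hK : ∀ l : ℕ, ∀ z ∈ (V l : Set G) \ (V (l + 1) : Set G),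
      K z = ∑ n ∈ Finset.range (l + 1),
        (Real.exp (-(t * φ n)) - Real.exp (-(t * φ (n + 1)))) * (q : ℝ) ^ (n * m n)) :
    Integrable K μ ∧ ∫ z : G, K z ∂μ = 1 := by
  have hq1 : 1 < q := hq
  have hk : Tendsto (fun n => n * m n) atTop atTop :=
    tendsto_atTop_mono (le_mul_self_of_doubling hm1 hmgrow) tendsto_id
  have hφmono : Monotone φ := monotone_of_eq_rpow (by exact_mod_cast hq1.le) hα.le
    (monotone_mul_self_of_doubling hmgrow) hφ0 hφ
  have hφtop : Tendsto φ atTop atTop := tendsto_atTop_of_eq_rpow (by exact_mod_cast hq1) hα hk hφ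
  have he : Antitone fun n => Real.exp (-(t * φ n)) := fun _ _ hab =>
    Real.exp_le_exp.2 (neg_le_neg (mul_le_mul_of_nonneg_left (hφmono hab) ht.le))
  have hsum := hasSum_sub_succ_of_antitone he
    (Real.tendsto_exp_atBot.comp (tendsto_neg_atTop_atBot.comp (hφtop.const_mul_atTop ht)))
  rw [hφ0, mul_zero, neg_zero, Real.exp_zero] at hsum
  have hnull : μ (⋂ n, (V n : Set G)) = 0 := by
    refine measure_iInter_eq_zero_of_tendsto (((ENNReal.tendsto_pow_atTop_nhds_zero_of_lt_one
      (ENNReal.inv_lt_one.2 (Nat.one_lt_cast.2 hq1))).comp hk).congr fun n => ?_)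
    rw [Function.comp_apply, hVmeas, ENNReal.inv_pow]
  refine integrable_and_integral_eq_of_eq_sum_on_shells (fun n => (hVopen n).measurableSet)
    (fun _ _ h => SetLike.coe_subset_coe.2 (antitone_nat_of_succ_le hVdesc h))
    (by rw [hV0, Subgroup.coe_top]) hnull
    (fun n => mul_nonneg (sub_nonneg.2 (he n.le_succ)) (by positivity)) hK
    (hsum.congr_fun fun n => ?_)
  rw [hVmeas, ENNReal.toReal_inv, ENNReal.toReal_pow, ENNReal.toReal_natCast, mul_assoc,
    mul_inv_cancel₀ (by positivity), mul_one]

/-- for `α > 0` and `t > 0`, the heat kernel `z ↦ G_α(t,z)` is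
`μ`-integrable on `G` and `∫_G G_α(t,z) dμ(z) = 1`. -/
theorem stmt6
    (q : ℕ) (hq : 2 ≤ q)
    (m : ℕ → ℕ) (hm0 : m 0 = 0) (hm1 : m 1 = 1)
    (hmgrow : ∀ n : ℕ, 1 ≤ n → 2 * m n ≤ m (n + 1))
    (G : Type*) [CommGroup G] [TopologicalSpace G] [IsTopologicalGroup G]
    [CompactSpace G] [MeasurableSpace G] [BorelSpace G]
    (μ : Measure G) [μ.IsHaarMeasure] [IsProbabilityMeasure μ]
    (V : ℕ → Subgroup G) (hVopen : ∀ n, IsOpen (V n : Set G))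
    (hV0 : V 0 = ⊤) (hVdesc : ∀ n, V (n + 1) ≤ V n)
    (hVmeas : ∀ n, μ (V n : Set G) = ((q : ENNReal) ^ (n * m n))⁻¹)
    (α t : ℝ) (hα : 0 < α) (ht : 0 < t)
    (φ : ℕ → ℝ) (hφ0 : φ 0 = 0)
    (hφ : ∀ n : ℕ, 1 ≤ n → φ n = (q : ℝ) ^ (α * ((n * m n : ℕ) : ℝ)))
    (K : G → ℝ)
    (hK : ∀ l : ℕ, ∀ z ∈ (V l : Set G) \ (V (l + 1) : Set G),
      K z = ∑ n ∈ Finset.range (l + 1),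
        (Real.exp (-(t * φ n)) - Real.exp (-(t * φ (n + 1)))) * (q : ℝ) ^ (n * m n))
    (hK0 : ∀ z ∈ ⋂ n : ℕ, (V n : Set G), K z = 0) :
    Integrable K μ ∧ ∫ z : G, K z ∂μ = 1 :=
  stmt6_general q hq m hm1 hmgrow G μ V hVopen hV0 hVdesc hVmeas α t hα ht φ hφ0 hφ K hK
end

section
/- Let α > 0 and let θ be a character of G of level N ≥ 1. Then the function x ↦ θ(x) − 1 is ν-integrable and ∫_G (θ(x) − 1) dν(x) = −q^{α·N·m_N}. (This identifies ν as the Lévy measure density of the process generated by −D^α: the locally spherically symmetric measure with density ν_l on V_l \ V_{l+1} reproduces the symbol −q^{α·N·m_N} in the Lévy–Khinchine formula.) -/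
open MeasureTheory Filter Topology

/-!
Since `θ - 1` vanishes on `V N`, its `ν`-integral splits over the annuli `V l \ V (l + 1)`,
`l < N`, on each of which `ν = ν_l • μ`. Orthogonality of characters gives
`∫_{V l} (θ - 1) dμ = -μ(V l)` for `l < N` and `0` for `l = N`, so the integral equals
`-(∑_{l < N - 1} ν_l (μ(V l) - μ(V (l + 1))) + ν_{N-1} μ(V (N - 1)))`. Summation by parts with
`(ν_{l+1} - ν_l) μ(V (l + 1)) = q^{α (l+2) m_{l+2}} - q^{α (l+1) m_{l+1}}` telescopes this to
`-q^{α N m_N}`.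
-/

open Finset

section Orthogonality

variable {G : Type*} [Group G] [MeasurableSpace G] [MeasurableMul G] {μ : Measure G}
  {θ : G → ℂ} {H : Subgroup G}

lemma setIntegral_subgroup_eq_zero_of_ne_one [μ.IsMulLeftInvariant]
    (hθmul : ∀ a b, θ (a * b) = θ a * θ b) (hH : MeasurableSet (H : Set G))
    {y : G} (hy : y ∈ H) (hθy : θ y ≠ 1) :
    ∫ x in (H : Set G), θ x ∂μ = 0 := by
  have htranslate : ∀ x, (H : Set G).indicator θ (y * x) = θ y * (H : Set G).indicator θ x := by
    intro x
    by_cases hx : x ∈ H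
    · rw [Set.indicator_of_mem hx, Set.indicator_of_mem (H.mul_mem hy hx), hθmul]
    · rw [Set.indicator_of_notMem hx, Set.indicator_of_notMem (by simpa [H.mul_mem_cancel_left hy]),
        mul_zero]
  have hfixed : θ y * ∫ x in (H : Set G), θ x ∂μ = ∫ x in (H : Set G), θ x ∂μ := by
    simp_rw [← integral_indicator hH, ← integral_const_mul, ← htranslate]
    exact integral_mul_left_eq_self _ y
  have := sub_eq_zero.mpr hfixed
  rw [← sub_one_mul, mul_eq_zero] at this
  exact this.resolve_left (sub_ne_zero.mpr hθy)

lemma setIntegral_subgroup_sub_one_of_ne_one [μ.IsMulLeftInvariant] [IsFiniteMeasure μ]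
    (hθmul : ∀ a b, θ (a * b) = θ a * θ b) (hθ : Integrable θ μ) (hH : MeasurableSet (H : Set G))
    {y : G} (hy : y ∈ H) (hθy : θ y ≠ 1) :
    ∫ x in (H : Set G), (θ x - 1) ∂μ = -(μ.real H : ℂ) := by
  rw [integral_sub hθ.integrableOn (integrable_const 1).integrableOn,
    setIntegral_subgroup_eq_zero_of_ne_one hθmul hH hy hθy, setIntegral_const]
  simp

end Orthogonality

lemma compl_succ_eq_compl_union_diff {α : Type*} {s : ℕ → Set α}
    (hs : ∀ n, s (n + 1) ⊆ s n) (n : ℕ) : (s (n + 1))ᶜ = (s n)ᶜ ∪ (s n \ s (n + 1)) := by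
  ext x
  have := @hs n x
  simp only [Set.mem_compl_iff, Set.mem_union, Set.mem_sdiff]
  tauto

section Annuli

variable {α E : Type*} [MeasurableSpace α] [NormedAddCommGroup E]
  {ν : Measure α} {f : α → E} {s : ℕ → Set α}

lemma integrableOn_compl_of_annuli (hs0 : s 0 = Set.univ) (hs : ∀ n, s (n + 1) ⊆ s n) {n : ℕ}
    (hf : ∀ l < n, IntegrableOn f (s l \ s (l + 1)) ν) :
    IntegrableOn f (s n)ᶜ ν := by
  induction n with
  | zero => simp [hs0]
  | succ n ih =>
    rw [compl_succ_eq_compl_union_diff hs]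
    exact (ih fun l hl => hf l (by omega)).union (hf n n.lt_succ_self)

lemma setIntegral_compl_eq_sum_annuli [NormedSpace ℝ E] (hs0 : s 0 = Set.univ)
    (hs : ∀ n, s (n + 1) ⊆ s n) (hmeas : ∀ n, MeasurableSet (s n)) {n : ℕ}
    (hf : ∀ l < n, IntegrableOn f (s l \ s (l + 1)) ν) :
    ∫ x in (s n)ᶜ, f x ∂ν = ∑ l ∈ range n, ∫ x in s l \ s (l + 1), f x ∂ν := by
  induction n with
  | zero => simp [hs0]
  | succ n ih =>
    have hf' : ∀ l < n, IntegrableOn f (s l \ s (l + 1)) ν := fun l hl => hf l (by omega)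
    rw [compl_succ_eq_compl_union_diff hs, sum_range_succ, ← ih hf',
      setIntegral_union (disjoint_compl_left.mono_right Set.sdiff_subset)
        ((hmeas n).diff (hmeas (n + 1))) (integrableOn_compl_of_annuli hs0 hs hf')
        (hf n n.lt_succ_self)]

lemma restrict_eq_smul_restrict_of_forall_subset {μ : Measure α} {A : Set α} {c : ENNReal}
    (hA : MeasurableSet A) (h : ∀ Γ, MeasurableSet Γ → Γ ⊆ A → ν Γ = c * μ Γ) :
    ν.restrict A = c • μ.restrict A := by
  ext Γ hΓ
  rw [Measure.restrict_apply hΓ, Measure.smul_apply, Measure.restrict_apply hΓ,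
    h _ (hΓ.inter hA) Set.inter_subset_right, smul_eq_mul]

lemma integral_eq_sum_of_density_on_annuli [NormedSpace ℝ E] {μ : Measure α}
    (hs0 : s 0 = Set.univ) (hs : ∀ n, s (n + 1) ⊆ s n) (hmeas : ∀ n, MeasurableSet (s n))
    {c : ℕ → ℝ} (hc : ∀ l, 0 ≤ c l)
    (hν : ∀ l Γ, MeasurableSet Γ → Γ ⊆ s l \ s (l + 1) → ν Γ = ENNReal.ofReal (c l) * μ Γ)
    (hf : Integrable f μ) {n : ℕ} (hf0 : ∀ x ∈ s n, f x = 0) :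
    Integrable f ν ∧
      ∫ x, f x ∂ν = ∑ l ∈ range n, c l • ((∫ x in s l, f x ∂μ) - ∫ x in s (l + 1), f x ∂μ) := by
  have hrestrict : ∀ l, ν.restrict (s l \ s (l + 1)) =
      ENNReal.ofReal (c l) • μ.restrict (s l \ s (l + 1)) := fun l =>
    restrict_eq_smul_restrict_of_forall_subset ((hmeas l).diff (hmeas (l + 1))) (hν l)
  have hfν : ∀ l < n, IntegrableOn f (s l \ s (l + 1)) ν := fun l _ => by
    rw [IntegrableOn, hrestrict l]
    exact hf.integrableOn.smul_measure ENNReal.ofReal_ne_top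
  have hf0' : ∀ x ∉ (s n)ᶜ, f x = 0 := fun x hx => hf0 x (not_not.mp hx)
  refine ⟨(integrableOn_compl_of_annuli hs0 hs hfν).integrable_of_forall_notMem_eq_zero hf0', ?_⟩
  rw [← setIntegral_eq_integral_of_forall_compl_eq_zero hf0',
    setIntegral_compl_eq_sum_annuli hs0 hs hmeas hfν]
  refine sum_congr rfl fun l _ => ?_
  rw [hrestrict l, integral_smul_measure, ENNReal.toReal_ofReal (hc l),
    setIntegral_sdiff (hmeas (l + 1)) hf.integrableOn (hs l)]

end Annuli

lemma sum_range_mul_sub_succ_add_mul {R : Type*} [CommRing R] (c r b : ℕ → R)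
    (h0 : c 0 * r 0 = b 0) (hstep : ∀ n, (c (n + 1) - c n) * r (n + 1) = b (n + 1) - b n)
    (n : ℕ) : ∑ l ∈ range n, c l * (r l - r (l + 1)) + c n * r n = b n := by
  induction n with
  | zero => simpa using h0
  | succ n ih =>
    rw [sum_range_succ]
    linear_combination ih + hstep n

section LevyDensity

noncomputable def levyDensity (q : ℕ) (m : ℕ → ℕ) (α : ℝ) (n : ℕ) : ℝ :=
  (q : ℝ) ^ α + ∑ l ∈ Icc 1 n, (q : ℝ) ^ (l * m l) *
    ((q : ℝ) ^ (α * (((l + 1) * m (l + 1) : ℕ) : ℝ)) - (q : ℝ) ^ (α * ((l * m l : ℕ) : ℝ)))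

variable {q : ℕ} {m : ℕ → ℕ} {α : ℝ}

lemma monotone_mul_apply_of_two_mul_le (hm : ∀ n, 1 ≤ n → 2 * m n ≤ m (n + 1)) :
    Monotone fun n => n * m n := by
  refine monotone_nat_of_le_succ fun n => ?_
  rcases Nat.eq_zero_or_pos n with rfl | hn
  · simp
  · exact Nat.mul_le_mul n.le_succ (by linarith [hm n hn])

lemma levyDensity_nonneg (hq : 1 ≤ q) (hα : 0 ≤ α) (hm : Monotone fun n => n * m n) (n : ℕ) :
    0 ≤ levyDensity q m α n := by
  have hq' : (1 : ℝ) ≤ q := by exact_mod_cast hq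
  refine add_nonneg (by positivity) (sum_nonneg fun l _ => mul_nonneg (by positivity) ?_)
  refine sub_nonneg.mpr (Real.rpow_le_rpow_of_exponent_le hq' ?_)
  exact mul_le_mul_of_nonneg_left (by exact_mod_cast hm l.le_succ) hα

lemma levyDensity_succ_sub (n : ℕ) :
    levyDensity q m α (n + 1) - levyDensity q m α n =
      (q : ℝ) ^ ((n + 1) * m (n + 1)) *
        ((q : ℝ) ^ (α * (((n + 2) * m (n + 2) : ℕ) : ℝ)) -
          (q : ℝ) ^ (α * (((n + 1) * m (n + 1) : ℕ) : ℝ))) := by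
  rw [levyDensity, levyDensity, sum_Icc_succ_top (by omega)]
  ring

lemma sum_levyDensity_mul_sub_add_mul (hq : q ≠ 0) (hm1 : m 1 = 1) (n : ℕ) :
    ∑ l ∈ range n, levyDensity q m α l *
        (((q : ℝ) ^ (l * m l))⁻¹ - ((q : ℝ) ^ ((l + 1) * m (l + 1)))⁻¹) +
      levyDensity q m α n * ((q : ℝ) ^ (n * m n))⁻¹ =
      (q : ℝ) ^ (α * (((n + 1) * m (n + 1) : ℕ) : ℝ)) := by
  refine sum_range_mul_sub_succ_add_mul (levyDensity q m α) (fun l => ((q : ℝ) ^ (l * m l))⁻¹)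
    (fun l => (q : ℝ) ^ (α * (((l + 1) * m (l + 1) : ℕ) : ℝ))) ?_ (fun l => ?_) n
  · simp [levyDensity, hm1]
  · have : (q : ℝ) ^ ((l + 1) * m (l + 1)) ≠ 0 := by positivity
    rw [levyDensity_succ_sub]
    field_simp

end LevyDensity

theorem stmt8_general
    (q : ℕ) (hq : 2 ≤ q)
    (m : ℕ → ℕ) (hm1 : m 1 = 1)
    (hmgrow : ∀ n : ℕ, 1 ≤ n → 2 * m n ≤ m (n + 1))
    (G : Type*) [CommGroup G] [TopologicalSpace G] [IsTopologicalGroup G]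
    [MeasurableSpace G] [BorelSpace G]
    (μ : Measure G) [μ.IsHaarMeasure] [IsProbabilityMeasure μ]
    (V : ℕ → Subgroup G) (hVopen : ∀ n, IsOpen (V n : Set G))
    (hV0 : V 0 = ⊤) (hVdesc : ∀ n, V (n + 1) ≤ V n)
    (hVmeas : ∀ n, μ (V n : Set G) = ((q : ENNReal) ^ (n * m n))⁻¹)
    (α : ℝ) (hα : 0 < α)
    (νs : ℕ → ℝ)
    (hνs : ∀ n : ℕ, νs n = (q : ℝ) ^ α + ∑ l ∈ Finset.Icc 1 n,
      (q : ℝ) ^ (l * m l) *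
        ((q : ℝ) ^ (α * (((l + 1) * m (l + 1) : ℕ) : ℝ))
          - (q : ℝ) ^ (α * ((l * m l : ℕ) : ℝ))))
    (ν : Measure G)
    (hν : ∀ l : ℕ, ∀ Γ : Set G, MeasurableSet Γ →
      Γ ⊆ (V l : Set G) \ (V (l + 1) : Set G) → ν Γ = ENNReal.ofReal (νs l) * μ Γ)
    (θ : UnitaryCharacter G) (N : ℕ) (hN : 1 ≤ N)
    (hθtriv : ∀ y ∈ (V N : Set G), θ.1 y = 1)
    (hθnontriv : ∃ y ∈ (V (N - 1) : Set G), θ.1 y ≠ 1) :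
    Integrable (fun x : G => θ.1 x - 1) ν ∧
    ∫ x : G, (θ.1 x - 1) ∂ν
      = -(((q : ℝ) ^ (α * ((N * m N : ℕ) : ℝ)) : ℝ) : ℂ) := by
  obtain rfl : νs = levyDensity q m α := funext hνs
  obtain ⟨K, rfl⟩ : ∃ K, N = K + 1 := ⟨N - 1, by omega⟩
  obtain ⟨hθc, hθmul, hθabs⟩ := θ.2
  obtain ⟨y, hy, hθy⟩ := hθnontriv
  rw [Nat.add_sub_cancel] at hy
  have hVm : ∀ n, MeasurableSet (V n : Set G) := fun n => (hVopen n).measurableSet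
  have hθμ : Integrable θ.1 μ :=
    .of_bound hθc.aestronglyMeasurable 1 (.of_forall fun x => (hθabs x).le)
  have hJ : ∀ l ≤ K, ∫ x in V l, (θ.1 x - 1) ∂μ = -((((q : ℝ) ^ (l * m l))⁻¹ : ℝ) : ℂ) :=
    fun l hl => by
      rw [setIntegral_subgroup_sub_one_of_ne_one hθmul hθμ (hVm l)
        (antitone_nat_of_succ_le hVdesc hl hy) hθy]
      simp [measureReal_def, hVmeas l, ENNReal.toReal_inv]
  have hJN : ∫ x in V (K + 1), (θ.1 x - 1) ∂μ = 0 :=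
    setIntegral_eq_zero_of_forall_eq_zero fun x hx => by simp [hθtriv x hx]
  obtain ⟨hint, hsum⟩ := integral_eq_sum_of_density_on_annuli (s := fun n => (V n : Set G))
    (f := fun x => θ.1 x - 1) (by simp [hV0]) hVdesc hVm
    (levyDensity_nonneg (by omega) hα.le (monotone_mul_apply_of_two_mul_le hmgrow)) hν
    (hθμ.sub (integrable_const 1)) (n := K + 1) fun x hx => by simp [hθtriv x hx]
  refine ⟨hint, ?_⟩
  rw [hsum, sum_range_succ, hJ K le_rfl, hJN, ← sum_levyDensity_mul_sub_add_mul (by omega) hm1 K,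
    sum_congr rfl fun l hl => by
      rw [hJ l (by simp at hl; omega), hJ (l + 1) (by simp at hl; omega)]]
  push_cast
  simp only [Complex.real_smul, neg_add, ← sum_neg_distrib]
  congr 1
  · exact sum_congr rfl fun l _ => by ring
  · ring

/-- for `α > 0` and a character `θ` of level `N ≥ 1`, the function
`x ↦ θ(x) − 1` is integrable with respect to the Lévy measure `ν` and
`∫_G (θ(x) − 1) dν(x) = −q^{α N m_N}`. -/
theorem stmt8
    (q : ℕ) (hq : 2 ≤ q)
    (m : ℕ → ℕ) (hm0 : m 0 = 0) (hm1 : m 1 = 1)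
    (hmgrow : ∀ n : ℕ, 1 ≤ n → 2 * m n ≤ m (n + 1))
    (G : Type*) [CommGroup G] [TopologicalSpace G] [IsTopologicalGroup G]
    [CompactSpace G] [MeasurableSpace G] [BorelSpace G]
    (μ : Measure G) [μ.IsHaarMeasure] [IsProbabilityMeasure μ]
    (V : ℕ → Subgroup G) (hVopen : ∀ n, IsOpen (V n : Set G))
    (hV0 : V 0 = ⊤) (hVdesc : ∀ n, V (n + 1) ≤ V n)
    (hVmeas : ∀ n, μ (V n : Set G) = ((q : ENNReal) ^ (n * m n))⁻¹)
    (α : ℝ) (hα : 0 < α)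
    (νs : ℕ → ℝ)
    (hνs : ∀ n : ℕ, νs n = (q : ℝ) ^ α + ∑ l ∈ Finset.Icc 1 n,
      (q : ℝ) ^ (l * m l) *
        ((q : ℝ) ^ (α * (((l + 1) * m (l + 1) : ℕ) : ℝ))
          - (q : ℝ) ^ (α * ((l * m l : ℕ) : ℝ))))
    (ν : Measure G)
    (hν : ∀ l : ℕ, ∀ Γ : Set G, MeasurableSet Γ →
      Γ ⊆ (V l : Set G) \ (V (l + 1) : Set G) → ν Γ = ENNReal.ofReal (νs l) * μ Γ)
    (hν0 : ν (⋂ n : ℕ, (V n : Set G)) = 0)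
    (θ : UnitaryCharacter G) (N : ℕ) (hN : 1 ≤ N)
    (hθtriv : ∀ y ∈ (V N : Set G), θ.1 y = 1)
    (hθnontriv : ∃ y ∈ (V (N - 1) : Set G), θ.1 y ≠ 1) :
    Integrable (fun x : G => θ.1 x - 1) ν ∧
    ∫ x : G, (θ.1 x - 1) ∂ν
      = -(((q : ℝ) ^ (α * ((N * m N : ℕ) : ℝ)) : ℝ) : ℂ) :=
  stmt8_general q hq m hm1 hmgrow G μ V hVopen hV0 hVdesc hVmeas α hα νs hνs ν hν θ N hN hθtriv
    hθnontriv
end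

section
/- Let q ≥ 2 be an integer, α > 0 a real number, and (m_n)_{n≥0} a sequence of natural numbers with m_0 = 0, m_1 = 1, and m_{n+1} ≥ 2·m_n for all n ≥ 1. Define ν_n = q^α + Σ_{l=1}^{n} q^{l·m_l}·(q^{α·(l+1)·m_{l+1}} − q^{α·l·m_l}) for n ≥ 0, and λ_n = Σ_{j=0}^{n−1} ν_j·(q^{−j·m_j} − q^{−(j+1)·m_{j+1}}) for n ≥ 1. Then λ_n·q^{−α·n·m_n} → 1 as n → ∞; that is, the Lévy measure of the complement of V_n satisfies ν(V \ V_n) ∼ q^{α·n·m_n}. -/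
open Filter Topology

/-- asymptotics of the Lévy measure of the complement of `V_n`:
`ν(V \ V_n) = λ_n ∼ q^{α n m_n}` as `n → ∞`. -/
theorem stmt12 (q : ℕ) (hq : 2 ≤ q) (α : ℝ) (hα : 0 < α)
    (m : ℕ → ℕ) (hm0 : m 0 = 0) (hm1 : m 1 = 1)
    (hmgrow : ∀ n : ℕ, 1 ≤ n → 2 * m n ≤ m (n + 1))
    (ν : ℕ → ℝ)
    (hν : ∀ n : ℕ, ν n = (q : ℝ) ^ α + ∑ l ∈ Finset.Icc 1 n,
      (q : ℝ) ^ (l * m l) *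
        ((q : ℝ) ^ (α * (((l + 1) * m (l + 1) : ℕ) : ℝ))
          - (q : ℝ) ^ (α * ((l * m l : ℕ) : ℝ))))
    (lam : ℕ → ℝ)
    (hlam : ∀ n : ℕ, 1 ≤ n → lam n = ∑ j ∈ Finset.range n,
      ν j * (((q : ℝ) ^ (j * m j))⁻¹ - ((q : ℝ) ^ ((j + 1) * m (j + 1)))⁻¹)) :
    Tendsto (fun n : ℕ => lam n * (q : ℝ) ^ (-(α * ((n * m n : ℕ) : ℝ))))
      atTop (𝓝 1) := by
  have hQ2 : (2:ℝ) ≤ (q:ℝ) := by exact_mod_cast hq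
  have hQ0 : (0:ℝ) < (q:ℝ) := by linarith
  have hQ1 : (1:ℝ) < (q:ℝ) := by linarith
  -- basic facts about m and M n := n * m n
  have hm : ∀ n, 1 ≤ n → 1 ≤ m n := by
    intro n hn
    induction n with
    | zero => omega
    | succ k ih =>
      rcases Nat.eq_zero_or_pos k with hk | hk
      · subst hk; simp [hm1]
      · have := hmgrow k hk
        have := ih hk
        omega
  have hMle : ∀ n : ℕ, n * m n ≤ (n + 1) * m (n + 1) := by
    intro n
    rcases Nat.eq_zero_or_pos n with h | h
    · simp [h]
    · have h1 := hmgrow n h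
      nlinarith
  have hMmono : Monotone (fun n : ℕ => n * m n) := monotone_nat_of_le_succ hMle
  have hMgap : ∀ n : ℕ, 1 ≤ n → n * m n + n + 2 ≤ (n + 1) * m (n + 1) := by
    intro n hn
    have h1 := hmgrow n hn
    have h2 := hm n hn
    nlinarith
  have hMn : ∀ n : ℕ, n ≤ n * m n := by
    intro n
    rcases Nat.eq_zero_or_pos n with h | h
    · simp [h]
    · exact Nat.le_mul_of_pos_right _ (hm n h)
  -- positivity facts
  have hap : ∀ k : ℕ, (0:ℝ) < (q:ℝ) ^ k := fun k => pow_pos hQ0 k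
  have hbpos : ∀ t : ℝ, (0:ℝ) < (q:ℝ) ^ t := fun t => Real.rpow_pos_of_pos hQ0 t
  have hb1 : ∀ n : ℕ, (1:ℝ) ≤ (q:ℝ) ^ (α * ((n * m n : ℕ) : ℝ)) := by
    intro n
    rw [show (1:ℝ) = (q:ℝ) ^ (0:ℝ) from (Real.rpow_zero _).symm]
    exact Real.rpow_le_rpow_of_exponent_le hQ1.le (by positivity)
  have hbmono : ∀ i j : ℕ, i ≤ j →
      (q:ℝ) ^ (α * ((i * m i : ℕ) : ℝ)) ≤ (q:ℝ) ^ (α * ((j * m j : ℕ) : ℝ)) := by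
    intro i j hij
    apply Real.rpow_le_rpow_of_exponent_le hQ1.le
    have := hMmono hij
    have : ((i * m i : ℕ) : ℝ) ≤ ((j * m j : ℕ) : ℝ) := by exact_mod_cast this
    nlinarith
  -- recursion for ν
  have hν' : ∀ n : ℕ, ν (n + 1) = ν n + (q:ℝ) ^ ((n + 1) * m (n + 1)) *
      ((q:ℝ) ^ (α * (((n + 2) * m (n + 2) : ℕ) : ℝ))
        - (q:ℝ) ^ (α * (((n + 1) * m (n + 1) : ℕ) : ℝ))) := by
    intro n
    rw [hν (n + 1), hν n, Finset.sum_Icc_succ_top (Nat.succ_le_succ (Nat.zero_le n))]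
    have h22 : n + 1 + 1 = n + 2 := rfl
    rw [h22]
    ring
  -- nonnegativity of ν
  have hνnn : ∀ n : ℕ, 0 ≤ ν n := by
    intro n
    rw [hν n]
    apply add_nonneg (hbpos α).le
    apply Finset.sum_nonneg
    intro l hl
    apply mul_nonneg (hap _).le
    have := hbmono l (l + 1) (Nat.le_succ l)
    linarith
  -- key closed form for lam
  have key : ∀ n : ℕ, lam (n + 1) =
      (q:ℝ) ^ (α * (((n + 1) * m (n + 1) : ℕ) : ℝ))
        - ν n * ((q:ℝ) ^ ((n + 1) * m (n + 1)))⁻¹ := by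
    intro n
    induction n with
    | zero =>
      rw [hlam 1 le_rfl]
      rw [Finset.sum_range_one, hν 0]
      simp only [Finset.Icc_eq_empty_of_lt (by norm_num : (0:ℕ) < 1), Finset.sum_empty,
        add_zero, Nat.zero_mul, hm0, pow_zero, inv_one, Nat.zero_add, Nat.one_mul, hm1,
        Nat.cast_one, mul_one, Nat.mul_zero, Nat.cast_zero]
      ring
    | succ k ih =>
      rw [hlam (k + 2) (by omega), Finset.sum_range_succ, ← hlam (k + 1) (by omega), ih,
        hν' k]
      have hP : ((q:ℝ) ^ ((k + 1) * m (k + 1))) ≠ 0 := (hap _).ne'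
      have hP2 : ((q:ℝ) ^ ((k + 2) * m (k + 2))) ≠ 0 := (hap _).ne'
      have h22 : k + 1 + 1 = k + 2 := rfl
      rw [h22]
      field_simp
      ring
  -- reduce to shifted sequence
  rw [← tendsto_add_atTop_iff_nat 1]
  -- the error term
  have heq : ∀ n : ℕ, lam (n + 1) * (q:ℝ) ^ (-(α * (((n + 1) * m (n + 1) : ℕ) : ℝ)))
      = 1 - ν n * ((q:ℝ) ^ ((n + 1) * m (n + 1)))⁻¹
          * ((q:ℝ) ^ (α * (((n + 1) * m (n + 1) : ℕ) : ℝ)))⁻¹ := by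
    intro n
    rw [key n, Real.rpow_neg hQ0.le]
    have hb : ((q:ℝ) ^ (α * (((n + 1) * m (n + 1) : ℕ) : ℝ))) ≠ 0 := (hbpos _).ne'
    field_simp
  have hE : Tendsto (fun n : ℕ => ν n * ((q:ℝ) ^ ((n + 1) * m (n + 1)))⁻¹
      * ((q:ℝ) ^ (α * (((n + 1) * m (n + 1) : ℕ) : ℝ)))⁻¹) atTop (𝓝 0) := by
    apply tendsto_of_tendsto_of_tendsto_of_le_of_le'
      (tendsto_const_nhds : Tendsto (fun _ : ℕ => (0:ℝ)) atTop (𝓝 0))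
      (h := fun n : ℕ => ((q:ℝ) ^ α + n) * (1/2 : ℝ) ^ n)
    · have h1 : Tendsto (fun n : ℕ => (q:ℝ) ^ α * (1/2 : ℝ) ^ n) atTop (𝓝 0) := by
        have := tendsto_pow_atTop_nhds_zero_of_lt_one (by norm_num : (0:ℝ) ≤ 1/2)
          (by norm_num : (1/2:ℝ) < 1)
        simpa using this.const_mul ((q:ℝ) ^ α)
      have h2 : Tendsto (fun n : ℕ => (n : ℝ) * (1/2 : ℝ) ^ n) atTop (𝓝 0) :=
        tendsto_self_mul_const_pow_of_lt_one (by norm_num) (by norm_num)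
      have := h1.add h2
      simpa [add_mul] using this
    · filter_upwards with n
      exact mul_nonneg (mul_nonneg (hνnn n) (by positivity)) (by positivity)
    · filter_upwards [eventually_ge_atTop 1] with n hn
      -- bound ν n
      have hterm : ∀ l ∈ Finset.Icc 1 n, (q : ℝ) ^ (l * m l) *
            ((q : ℝ) ^ (α * (((l + 1) * m (l + 1) : ℕ) : ℝ))
              - (q : ℝ) ^ (α * ((l * m l : ℕ) : ℝ)))
          ≤ (q:ℝ) ^ (n * m n) * (q:ℝ) ^ (α * (((n + 1) * m (n + 1) : ℕ) : ℝ)) := by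
        intro l hl
        simp only [Finset.mem_Icc] at hl
        have h1 : (q:ℝ) ^ (l * m l) ≤ (q:ℝ) ^ (n * m n) :=
          pow_le_pow_right₀ hQ1.le (hMmono hl.2)
        have h2 : (q : ℝ) ^ (α * (((l + 1) * m (l + 1) : ℕ) : ℝ))
            ≤ (q:ℝ) ^ (α * (((n + 1) * m (n + 1) : ℕ) : ℝ)) :=
          hbmono (l + 1) (n + 1) (by omega)
        have h3 : (0:ℝ) ≤ (q : ℝ) ^ (α * ((l * m l : ℕ) : ℝ)) := (hbpos _).le
        have h4 : (0:ℝ) < (q:ℝ) ^ (l * m l) := hap _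
        have h5 : (0:ℝ) ≤ (q : ℝ) ^ (α * (((l + 1) * m (l + 1) : ℕ) : ℝ)) := (hbpos _).le
        have h6 : (0:ℝ) ≤ (q:ℝ) ^ (n * m n) := (hap _).le
        nlinarith [mul_le_mul h1 h2 h5 h6, mul_nonneg h4.le h3]
      have hsum := Finset.sum_le_sum hterm
      rw [Finset.sum_const, Nat.card_Icc, Nat.add_sub_cancel, nsmul_eq_mul] at hsum
      have hbound : ν n ≤ (q:ℝ) ^ α + n * ((q:ℝ) ^ (n * m n)
          * (q:ℝ) ^ (α * (((n + 1) * m (n + 1) : ℕ) : ℝ))) := by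
        rw [hν n]; linarith
      -- now bound the whole error term
      have hA : ((q:ℝ) ^ ((n + 1) * m (n + 1)))⁻¹ ≤ (1/2 : ℝ) ^ n := by
        rw [one_div, inv_pow]
        apply inv_anti₀ (pow_pos two_pos n)
        calc (2:ℝ) ^ n ≤ (q:ℝ) ^ n := by gcongr
          _ ≤ (q:ℝ) ^ ((n + 1) * m (n + 1)) := by
              apply pow_le_pow_right₀ hQ1.le
              have := hMn (n + 1); omega
      have hQMgap : (q:ℝ) ^ (n * m n) * ((q:ℝ) ^ ((n + 1) * m (n + 1)))⁻¹
          ≤ (1/2 : ℝ) ^ n := by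
        have hgap := hMgap n hn
        have hmain : (2:ℝ) ^ n * (q:ℝ) ^ (n * m n) ≤ (q:ℝ) ^ ((n + 1) * m (n + 1)) := by
          calc (2:ℝ) ^ n * (q:ℝ) ^ (n * m n) ≤ (q:ℝ) ^ n * (q:ℝ) ^ (n * m n) := by
                gcongr
            _ = (q:ℝ) ^ (n + n * m n) := (pow_add _ _ _).symm
            _ ≤ (q:ℝ) ^ ((n + 1) * m (n + 1)) := pow_le_pow_right₀ hQ1.le (by omega)
        rw [← div_eq_mul_inv, div_le_iff₀ (hap _), one_div, inv_pow, inv_mul_eq_div,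
          le_div_iff₀ (pow_pos two_pos n), mul_comm]
        exact hmain
      have hBinv : ((q:ℝ) ^ (α * (((n + 1) * m (n + 1) : ℕ) : ℝ)))⁻¹ ≤ 1 :=
        inv_le_one_of_one_le₀ (hb1 (n + 1))
      have hApos : (0:ℝ) < ((q:ℝ) ^ ((n + 1) * m (n + 1)))⁻¹ := by positivity
      have hBpos : (0:ℝ) < (q:ℝ) ^ (α * (((n + 1) * m (n + 1) : ℕ) : ℝ)) := hbpos _
      calc ν n * ((q:ℝ) ^ ((n + 1) * m (n + 1)))⁻¹
            * ((q:ℝ) ^ (α * (((n + 1) * m (n + 1) : ℕ) : ℝ)))⁻¹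
          ≤ ((q:ℝ) ^ α + n * ((q:ℝ) ^ (n * m n)
              * (q:ℝ) ^ (α * (((n + 1) * m (n + 1) : ℕ) : ℝ))))
            * ((q:ℝ) ^ ((n + 1) * m (n + 1)))⁻¹
            * ((q:ℝ) ^ (α * (((n + 1) * m (n + 1) : ℕ) : ℝ)))⁻¹ := by
            gcongr
        _ = (q:ℝ) ^ α * ((q:ℝ) ^ ((n + 1) * m (n + 1)))⁻¹
              * ((q:ℝ) ^ (α * (((n + 1) * m (n + 1) : ℕ) : ℝ)))⁻¹
            + n * ((q:ℝ) ^ (n * m n) * ((q:ℝ) ^ ((n + 1) * m (n + 1)))⁻¹)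
              * ((q:ℝ) ^ (α * (((n + 1) * m (n + 1) : ℕ) : ℝ))
                * ((q:ℝ) ^ (α * (((n + 1) * m (n + 1) : ℕ) : ℝ)))⁻¹) := by ring
        _ = (q:ℝ) ^ α * ((q:ℝ) ^ ((n + 1) * m (n + 1)))⁻¹
              * ((q:ℝ) ^ (α * (((n + 1) * m (n + 1) : ℕ) : ℝ)))⁻¹
            + n * ((q:ℝ) ^ (n * m n) * ((q:ℝ) ^ ((n + 1) * m (n + 1)))⁻¹) := by
            rw [mul_inv_cancel₀ hBpos.ne', mul_one]
        _ ≤ (q:ℝ) ^ α * (1/2 : ℝ) ^ n * 1 + n * (1/2 : ℝ) ^ n := by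
            gcongr
        _ = ((q:ℝ) ^ α + n) * (1/2 : ℝ) ^ n := by ring
  have hlim : Tendsto (fun n : ℕ => 1 - (ν n * ((q:ℝ) ^ ((n + 1) * m (n + 1)))⁻¹
      * ((q:ℝ) ^ (α * (((n + 1) * m (n + 1) : ℕ) : ℝ)))⁻¹)) atTop (𝓝 1) := by
    simpa using (tendsto_const_nhds : Tendsto (fun _ : ℕ => (1:ℝ)) atTop (𝓝 1)).sub hE
  exact hlim.congr (fun n => (heq n).symm)
end

section
/- Let q ≥ 2 be an integer, let 0 < α < 1 be real, and let (m_n)_{n≥0} be a sequence of natural numbers with m_0 = 0, m_1 = 1, and m_{n+1} ≥ 2·m_n for all n ≥ 1. Define ν_n = q^α + Σ_{l=1}^{n} q^{l·m_l}·(q^{α·(l+1)·m_{l+1}} − q^{α·l·m_l}) and λ_n = Σ_{j=0}^{n−1} ν_j·(q^{−j·m_j} − q^{−(j+1)·m_{j+1}}). Then λ_n > 0 for all n ≥ 1 and (λ_n·q^{−n·m_n})·(q^{(n−1)·m_{n−1}}/λ_{n−1}) → 0 as n → ∞; in particular, limsup_{n→∞} [ν(V \ V_n)/M(n)]·[M(n−1)/ν(V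 \ V_{n−1})] < 1, where M(n) = q^{n·m_n}. -/
open Filter Topology

private lemma aux13 (q : ℝ) (hq1 : 1 < q) (α : ℝ) (hα0 : 0 < α) (hα1 : α < 1)
    (a : ℕ → ℕ) (ha0 : a 0 = 0) (ha1 : a 1 = 1)
    (hgap : ∀ n : ℕ, a n + n ≤ a (n + 1))
    (ν : ℕ → ℝ)
    (hν : ∀ n : ℕ, ν n = q ^ α + ∑ l ∈ Finset.Icc 1 n,
      q ^ (a l) * (q ^ (α * ((a (l + 1) : ℕ) : ℝ)) - q ^ (α * ((a l : ℕ) : ℝ))))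
    (lam : ℕ → ℝ)
    (hlam : ∀ n : ℕ, lam n = ∑ j ∈ Finset.range n,
      ν j * ((q ^ (a j))⁻¹ - (q ^ (a (j + 1)))⁻¹)) :
    (∀ n : ℕ, 1 ≤ n → 0 < lam n) ∧
    Tendsto (fun n : ℕ =>
        (lam (n + 1) * (q ^ (a (n + 1)))⁻¹) * (q ^ (a n) / lam n)) atTop (𝓝 0) ∧
    Filter.limsup (fun n : ℕ =>
        (lam (n + 1) * (q ^ (a (n + 1)))⁻¹) * (q ^ (a n) / lam n)) atTop < 1 := by
  have hq0 : (0:ℝ) < q := lt_trans one_pos hq1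
  have hQk : ∀ k : ℕ, (0:ℝ) < q ^ k := fun k => pow_pos hq0 k
  have hstep : ∀ n, a n ≤ a (n + 1) := fun n => le_trans (Nat.le_add_right _ _) (hgap n)
  have amono : Monotone a := monotone_nat_of_le_succ hstep
  set b : ℕ → ℝ := fun n => q ^ (α * ((a n : ℕ) : ℝ)) with hbdef
  clear_value b
  have hν' : ∀ n, ν n = q ^ α + ∑ l ∈ Finset.Icc 1 n, q ^ (a l) * (b (l + 1) - b l) := by
    simp only [hbdef]; exact hν
  have hbpos : ∀ n, 0 < b n := by
    intro n; rw [hbdef]; exact Real.rpow_pos_of_pos hq0 _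
  have hble : ∀ i j, i ≤ j → b i ≤ b j := by
    intro i j hij; rw [hbdef]
    exact Real.rpow_le_rpow_of_exponent_le hq1.le
      (mul_le_mul_of_nonneg_left (by exact_mod_cast amono hij) hα0.le)
  have hqα_eq : q ^ α = b 1 := by rw [hbdef]; simp [ha1]
  have hterm_nonneg : ∀ l : ℕ, (0:ℝ) ≤ q ^ (a l) * (b (l + 1) - b l) :=
    fun l => mul_nonneg (hQk _).le (sub_nonneg.2 (hble _ _ (Nat.le_succ l)))
  have hν_pos : ∀ n, 0 < ν n := by
    intro n; rw [hν' n]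
    have h1 : (0:ℝ) < q ^ α := Real.rpow_pos_of_pos hq0 _
    have hs : 0 ≤ ∑ l ∈ Finset.Icc 1 n, q ^ (a l) * (b (l + 1) - b l) :=
      Finset.sum_nonneg fun l _ => hterm_nonneg l
    linarith
  have hinv_mono : ∀ j : ℕ, (q ^ (a (j + 1)))⁻¹ ≤ (q ^ (a j))⁻¹ := fun j =>
    inv_anti₀ (hQk _) (pow_le_pow_right₀ hq1.le (hstep j))
  have ht_nonneg : ∀ j : ℕ, 0 ≤ ν j * ((q ^ (a j))⁻¹ - (q ^ (a (j + 1)))⁻¹) :=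
    fun j => mul_nonneg (hν_pos j).le (sub_nonneg.2 (hinv_mono j))
  have hlam_nonneg : ∀ n, 0 ≤ lam n := by
    intro n; rw [hlam]; exact Finset.sum_nonneg fun j _ => ht_nonneg j
  set c : ℝ := (1 - q⁻¹) * (1 - q ^ (-α)) with hcdef
  clear_value c
  have hqinv1 : q⁻¹ < 1 := inv_lt_one_of_one_lt₀ hq1
  have hqnα1 : q ^ (-α) < 1 := Real.rpow_lt_one_of_one_lt_of_neg hq1 (neg_lt_zero.2 hα0)
  have hqnα0 : (0:ℝ) < q ^ (-α) := Real.rpow_pos_of_pos hq0 _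
  have hc0 : 0 < c := by
    rw [hcdef]
    apply mul_pos <;> [skip; skip] <;> linarith [inv_pos.2 hq0]
  -- key lower bound on each summand of lam
  have hkey_low : ∀ k : ℕ, c * b (k + 1) ≤ ν k * ((q ^ (a k))⁻¹ - (q ^ (a (k + 1)))⁻¹) := by
    intro k
    rcases Nat.eq_zero_or_pos k with hk | hk
    · subst hk
      have hν0 : ν 0 = q ^ α := by rw [hν' 0]; simp
      rw [hν0, ha0, ha1, hqα_eq, hcdef]
      rw [pow_zero, pow_one, inv_one]
      have hb1 := hbpos 1
      nlinarith [mul_nonneg (mul_nonneg (sub_nonneg.2 hqinv1.le) hb1.le) hqnα0.le]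
    · have hgk : a k + 1 ≤ a (k + 1) := le_trans (by omega) (hgap k)
      have hν_lb : q ^ (a k) * (b (k + 1) - b k) ≤ ν k := by
        rw [hν' k]
        have hmem : k ∈ Finset.Icc 1 k := Finset.mem_Icc.2 ⟨hk, le_refl k⟩
        have h1 : q ^ (a k) * (b (k + 1) - b k)
            ≤ ∑ l ∈ Finset.Icc 1 k, q ^ (a l) * (b (l + 1) - b l) :=
          Finset.single_le_sum (f := fun l => q ^ (a l) * (b (l + 1) - b l))
            (fun l _ => hterm_nonneg l) hmem
        have h2 : (0:ℝ) ≤ q ^ α := (Real.rpow_pos_of_pos hq0 _).le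
        linarith
      have hinvgap : (1 - q⁻¹) * (q ^ (a k))⁻¹ ≤ (q ^ (a k))⁻¹ - (q ^ (a (k + 1)))⁻¹ := by
        have h1 : (q ^ (a (k + 1)))⁻¹ ≤ q⁻¹ * (q ^ (a k))⁻¹ := by
          rw [← mul_inv]
          refine inv_anti₀ (by positivity) ?_
          calc q * q ^ (a k) = q ^ (a k + 1) := (pow_succ' q (a k)).symm
            _ ≤ q ^ (a (k + 1)) := pow_le_pow_right₀ hq1.le hgk
        nlinarith [inv_pos.2 (hQk (a k))]
      have hbgap : (1 - q ^ (-α)) * b (k + 1) ≤ b (k + 1) - b k := by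
        have h1 : b k ≤ q ^ (-α) * b (k + 1) := by
          rw [hbdef]
          simp only
          rw [← Real.rpow_add hq0]
          apply Real.rpow_le_rpow_of_exponent_le hq1.le
          have h2 : (a k : ℝ) + 1 ≤ (a (k + 1) : ℝ) := by exact_mod_cast hgk
          nlinarith
        nlinarith
      have hB : (0:ℝ) ≤ (1 - q⁻¹) * (q ^ (a k))⁻¹ :=
        mul_nonneg (by linarith) (inv_pos.2 (hQk _)).le
      have h3 := mul_le_mul hν_lb hinvgap hB (hν_pos k).le
      have h4 : q ^ (a k) * (b (k + 1) - b k) * ((1 - q⁻¹) * (q ^ (a k))⁻¹)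
          = (1 - q⁻¹) * (b (k + 1) - b k) := by
        field_simp
      rw [h4] at h3
      have h5 : c * b (k + 1) ≤ (1 - q⁻¹) * (b (k + 1) - b k) := by
        rw [hcdef]
        calc (1 - q⁻¹) * (1 - q ^ (-α)) * b (k + 1)
            = (1 - q⁻¹) * ((1 - q ^ (-α)) * b (k + 1)) := by ring
          _ ≤ (1 - q⁻¹) * (b (k + 1) - b k) :=
              mul_le_mul_of_nonneg_left hbgap (by linarith)
      linarith
  have hlow : ∀ n, 1 ≤ n → c * b n ≤ lam n := by
    intro n hn
    obtain ⟨k, rfl⟩ : ∃ k, n = k + 1 := ⟨n - 1, by omega⟩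
    rw [hlam]
    have hmem : k ∈ Finset.range (k + 1) := Finset.self_mem_range_succ k
    have h1 : ν k * ((q ^ (a k))⁻¹ - (q ^ (a (k + 1)))⁻¹)
        ≤ ∑ j ∈ Finset.range (k + 1), ν j * ((q ^ (a j))⁻¹ - (q ^ (a (j + 1)))⁻¹) :=
      Finset.single_le_sum (f := fun j => ν j * ((q ^ (a j))⁻¹ - (q ^ (a (j + 1)))⁻¹))
        (fun j _ => ht_nonneg j) hmem
    linarith [hkey_low k]
  have hlampos : ∀ n, 1 ≤ n → 0 < lam n :=
    fun n hn => lt_of_lt_of_le (mul_pos hc0 (hbpos n)) (hlow n hn)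
  -- upper bound
  have hup : ∀ n : ℕ, lam n ≤ (n : ℝ) * ((n : ℝ) * b n) := by
    intro n
    rw [hlam]
    have h1 : ∀ j ∈ Finset.range n,
        ν j * ((q ^ (a j))⁻¹ - (q ^ (a (j + 1)))⁻¹) ≤ (n : ℝ) * b n := by
      intro j hj
      have hjn : j < n := Finset.mem_range.1 hj
      have h2 : ν j * ((q ^ (a j))⁻¹ - (q ^ (a (j + 1)))⁻¹) ≤ ν j * (q ^ (a j))⁻¹ := by
        apply mul_le_mul_of_nonneg_left _ (hν_pos j).le
        have := (inv_pos.2 (hQk (a (j + 1)))).le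
        linarith
      have h3 : ν j ≤ ((j : ℝ) + 1) * (q ^ (a j) * b (j + 1)) := by
        rw [hν' j]
        have hbound : ∀ l ∈ Finset.Icc 1 j,
            q ^ (a l) * (b (l + 1) - b l) ≤ q ^ (a j) * b (j + 1) := by
          intro l hl
          obtain ⟨hl1, hlj⟩ := Finset.mem_Icc.1 hl
          have hb1 : b (l + 1) - b l ≤ b (l + 1) := by linarith [hbpos l]
          calc q ^ (a l) * (b (l + 1) - b l) ≤ q ^ (a l) * b (l + 1) :=
                mul_le_mul_of_nonneg_left hb1 (hQk _).le
            _ ≤ q ^ (a j) * b (j + 1) :=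
                mul_le_mul (pow_le_pow_right₀ hq1.le (amono hlj))
                  (hble _ _ (by omega)) (hbpos _).le (hQk _).le
        have hsum := Finset.sum_le_sum hbound
        have hcard : ∑ _l ∈ Finset.Icc 1 j, (q ^ (a j) * b (j + 1))
            = (j : ℝ) * (q ^ (a j) * b (j + 1)) := by
          rw [Finset.sum_const, Nat.card_Icc]
          simp [nsmul_eq_mul]
        rw [hcard] at hsum
        have hqα : q ^ α ≤ q ^ (a j) * b (j + 1) := by
          have h4 : q ^ α ≤ b (j + 1) := hqα_eq ▸ hble 1 (j + 1) (by omega)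
          have h5 : (1:ℝ) ≤ q ^ (a j) := one_le_pow₀ hq1.le
          nlinarith [hbpos (j + 1)]
        nlinarith
      have h6 : ν j * (q ^ (a j))⁻¹ ≤ ((j : ℝ) + 1) * b (j + 1) := by
        have h7 := mul_le_mul_of_nonneg_right h3 (inv_pos.2 (hQk (a j))).le
        calc ν j * (q ^ (a j))⁻¹
            ≤ ((j : ℝ) + 1) * (q ^ (a j) * b (j + 1)) * (q ^ (a j))⁻¹ := h7
          _ = ((j : ℝ) + 1) * b (j + 1) := by field_simp
      have h8 : ((j : ℝ) + 1) * b (j + 1) ≤ (n : ℝ) * b n := by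
        apply mul_le_mul _ (hble _ _ hjn) (hbpos _).le (by positivity)
        exact_mod_cast hjn
      linarith
    calc ∑ j ∈ Finset.range n, ν j * ((q ^ (a j))⁻¹ - (q ^ (a (j + 1)))⁻¹)
        ≤ ∑ _j ∈ Finset.range n, (n : ℝ) * b n := Finset.sum_le_sum h1
      _ = (n : ℝ) * ((n : ℝ) * b n) := by
          rw [Finset.sum_const, Finset.card_range, nsmul_eq_mul]
  -- the geometric factor
  set r : ℝ := q ^ (α - 1) with hrdef
  clear_value r
  have hr0 : 0 < r := by rw [hrdef]; exact Real.rpow_pos_of_pos hq0 _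
  have hr1 : r < 1 := by
    rw [hrdef]; exact Real.rpow_lt_one_of_one_lt_of_neg hq1 (by linarith)
  have hS : ∀ n : ℕ, b (n + 1) * (q ^ (a (n + 1)))⁻¹ * (q ^ (a n)) / b n ≤ r ^ n := by
    intro n
    have e1 : b (n + 1) * (q ^ (a (n + 1)))⁻¹ * (q ^ (a n)) / b n
        = q ^ (α * ((a (n + 1) : ℕ) : ℝ) + (-((a (n + 1) : ℕ) : ℝ)) + ((a n : ℕ) : ℝ)
            + (-(α * ((a n : ℕ) : ℝ)))) := by
      rw [Real.rpow_add hq0, Real.rpow_add hq0, Real.rpow_add hq0,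
        Real.rpow_neg hq0.le, Real.rpow_neg hq0.le, Real.rpow_natCast, Real.rpow_natCast,
        hbdef]
      simp only
      ring
    have e2 : r ^ n = q ^ ((α - 1) * (n : ℝ)) := by
      rw [hrdef, ← Real.rpow_natCast (q ^ (α - 1)) n, ← Real.rpow_mul hq0.le]
    rw [e1, e2]
    apply Real.rpow_le_rpow_of_exponent_le hq1.le
    have hd : ((a n : ℕ) : ℝ) + (n : ℝ) ≤ ((a (n + 1) : ℕ) : ℝ) := by exact_mod_cast hgap n
    nlinarith [mul_nonneg (sub_nonneg.2 hα1.le)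
      (by linarith : (0:ℝ) ≤ ((a (n + 1) : ℕ) : ℝ) - ((a n : ℕ) : ℝ) - (n : ℝ))]
  have hlam0 : lam 0 = 0 := by rw [hlam]; simp
  set R : ℕ → ℝ := fun n => (lam (n + 1) * (q ^ (a (n + 1)))⁻¹) * (q ^ (a n) / lam n)
    with hRdef
  have hRapp : ∀ n, R n = (lam (n + 1) * (q ^ (a (n + 1)))⁻¹) * (q ^ (a n) / lam n) :=
    fun n => rfl
  clear_value R
  have hRnonneg : ∀ n, 0 ≤ R n := by
    intro n
    rw [hRapp]
    exact mul_nonneg (mul_nonneg (hlam_nonneg _) (inv_pos.2 (hQk _)).le)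
      (div_nonneg (hQk _).le (hlam_nonneg _))
  have hRbound : ∀ n, R n ≤ (((n : ℝ) + 1) ^ 2 / c) * r ^ n := by
    intro n
    rcases Nat.eq_zero_or_pos n with h | h
    · subst h
      have hR0 : R 0 = 0 := by
        rw [hRapp, hlam0, div_zero, mul_zero]
      rw [hR0]
      exact mul_nonneg (div_nonneg (by positivity) hc0.le) (pow_nonneg hr0.le 0)
    · have hlamn : 0 < lam n := hlampos n h
      have hupn : lam (n + 1) ≤ ((n : ℝ) + 1) * (((n : ℝ) + 1) * b (n + 1)) := by
        have h9 := hup (n + 1)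
        push_cast at h9
        linarith
      have hlipos : (0:ℝ) ≤ q ^ (a n) * (q ^ (a (n + 1)))⁻¹ :=
        (mul_pos (hQk _) (inv_pos.2 (hQk _))).le
      have hbne : b n ≠ 0 := (hbpos n).ne'
      have hcne : c ≠ 0 := hc0.ne'
      calc R n = (lam (n + 1) / lam n) * (q ^ (a n) * (q ^ (a (n + 1)))⁻¹) := by
            rw [hRapp]
            ring
          _ ≤ ((((n : ℝ) + 1) * (((n : ℝ) + 1) * b (n + 1))) / (c * b n))
                * (q ^ (a n) * (q ^ (a (n + 1)))⁻¹) := by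
            apply mul_le_mul_of_nonneg_right _ hlipos
            exact div_le_div₀
              (mul_nonneg (by positivity) (mul_nonneg (by positivity) (hbpos _).le))
              hupn (mul_pos hc0 (hbpos n)) (hlow n h)
          _ = (((n : ℝ) + 1) ^ 2 / c)
                * (b (n + 1) * (q ^ (a (n + 1)))⁻¹ * (q ^ (a n)) / b n) := by
            rw [div_eq_mul_inv, div_eq_mul_inv, mul_inv]
            ring
          _ ≤ (((n : ℝ) + 1) ^ 2 / c) * r ^ n :=
            mul_le_mul_of_nonneg_left (hS n) (div_nonneg (by positivity) hc0.le)
  have hg : Tendsto (fun n : ℕ => (((n : ℝ) + 1) ^ 2 / c) * r ^ n) atTop (𝓝 0) := by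
    have h1 : Tendsto (fun n : ℕ => (n : ℝ) ^ 2 * r ^ n) atTop (𝓝 0) :=
      tendsto_pow_const_mul_const_pow_of_lt_one 2 hr0.le hr1
    have h2 : Tendsto (fun n : ℕ => ((n + 1 : ℕ) : ℝ) ^ 2 * r ^ (n + 1)) atTop (𝓝 0) :=
      h1.comp (tendsto_add_atTop_nat 1)
    have h3 := h2.const_mul (r⁻¹ / c)
    rw [mul_zero] at h3
    refine h3.congr fun n => ?_
    have hrne : r ≠ 0 := hr0.ne'
    show (r⁻¹ / c) * (((n + 1 : ℕ) : ℝ) ^ 2 * r ^ (n + 1)) = _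
    push_cast
    rw [pow_succ]
    field_simp [hrne]
    ring
  have htend : Tendsto R atTop (𝓝 0) := squeeze_zero hRnonneg hRbound hg
  refine ⟨hlampos, htend, ?_⟩
  have hls : Filter.limsup R atTop = 0 := htend.limsup_eq
  rw [hls]
  norm_num

/-- Evans's criterion for `0 < α < 1`: with
`λ_n = ν(V \ V_n)` and `M(n) = q^{n m_n}`, one has `λ_n > 0` for `n ≥ 1`,
`[λ_n / M(n)]·[M(n−1) / λ_{n−1}] → 0`, and in particular
`limsup_{n→∞} [λ_n / M(n)]·[M(n−1) / λ_{n−1}] < 1`. -/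
theorem stmt13 (q : ℕ) (hq : 2 ≤ q) (α : ℝ) (hα0 : 0 < α) (hα1 : α < 1)
    (m : ℕ → ℕ) (hm0 : m 0 = 0) (hm1 : m 1 = 1)
    (hmgrow : ∀ n : ℕ, 1 ≤ n → 2 * m n ≤ m (n + 1))
    (ν : ℕ → ℝ)
    (hν : ∀ n : ℕ, ν n = (q : ℝ) ^ α + ∑ l ∈ Finset.Icc 1 n,
      (q : ℝ) ^ (l * m l) *
        ((q : ℝ) ^ (α * (((l + 1) * m (l + 1) : ℕ) : ℝ))
          - (q : ℝ) ^ (α * ((l * m l : ℕ) : ℝ))))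
    (lam : ℕ → ℝ)
    (hlam : ∀ n : ℕ, lam n = ∑ j ∈ Finset.range n,
      ν j * (((q : ℝ) ^ (j * m j))⁻¹ - ((q : ℝ) ^ ((j + 1) * m (j + 1)))⁻¹)) :
    (∀ n : ℕ, 1 ≤ n → 0 < lam n) ∧
    Tendsto (fun n : ℕ =>
        (lam (n + 1) * ((q : ℝ) ^ ((n + 1) * m (n + 1)))⁻¹) *
          ((q : ℝ) ^ (n * m n) / lam n))
      atTop (𝓝 0) ∧
    Filter.limsup (fun n : ℕ =>
        (lam (n + 1) * ((q : ℝ) ^ ((n + 1) * m (n + 1)))⁻¹) *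
          ((q : ℝ) ^ (n * m n) / lam n))
      atTop < 1 := by
  have hq1 : (1:ℝ) < (q : ℝ) := by exact_mod_cast hq
  have hm : ∀ n : ℕ, 1 ≤ m (n + 1) := by
    intro n
    induction n with
    | zero => exact hm1.ge
    | succ k ih => have := hmgrow (k + 1) (by omega); omega
  have hgap : ∀ n : ℕ, n * m n + n ≤ (n + 1) * m (n + 1) := by
    intro n
    cases n with
    | zero => simp [hm1]
    | succ k =>
      have h1 := hmgrow (k + 1) (by omega)
      have h2 := hm k
      nlinarith
  exact aux13 (q : ℝ) hq1 α hα0 hα1 (fun n => n * m n) (by simp) (by simp [hm1]) hgap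
    ν hν lam hlam
end
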